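/- arXiv:0904.2541 — 8 statements merged into one kernel-verified Lean document; each statement's English description precedes it below -/
import Mathlib

section
/- For every integer n ≥ 4 there exists an n-uniform hypergraph F with maximum degree at most 2^(n+2)/n on which Maker has a winning pairing strategy. -/
open Finset

/-- A (finite) hypergraph: a vertex set and a family of hyperedges. -/
structure FinHypergraph (α : Type*) where
  V : Finset α
  E : Finset (Finset α)

namespace FinHypergraph

variable {α : Type*} [DecidableEq α]

/-- `H` is an `n`-uniform hypergraph: every hyperedge is an `n`-element subset of `V`. -/
def IsUniform (H : FinHypergraph α) (n : ℕ) : Prop :=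
  (∀ e ∈ H.E, e ⊆ H.V) ∧ (∀ e ∈ H.E, e.card = n)

/-- The degree of a vertex: the number of hyperedges containing it. -/
def degree (H : FinHypergraph α) (v : α) : ℕ :=
  (H.E.filter fun e => v ∈ e).card

/-- The neighborhood size of a hyperedge `e`: the number of hyperedges `e' ≠ e`
meeting `e`. -/
def nbhdSize (H : FinHypergraph α) (e : Finset α) : ℕ :=
  (H.E.filter fun e' => e' ≠ e ∧ (e' ∩ e).Nonempty).card

/-- Maker has a winning pairing strategy on `H`: there are a first vertex `v₀ ∈ V` and
pairwise disjoint pairs from `V \ {v₀}` covering all but at most one vertex of `V \ {v₀}`,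
such that any set consisting of `v₀` together with exactly one vertex from each pair
contains a hyperedge. -/
def MakerPairingWin (H : FinHypergraph α) : Prop :=
  ∃ v₀ ∈ H.V, ∃ P : Finset (Finset α),
    (∀ p ∈ P, p.card = 2 ∧ p ⊆ H.V.erase v₀) ∧
    (∀ p ∈ P, ∀ q ∈ P, p ≠ q → Disjoint p q) ∧
    ((H.V.erase v₀) \ P.sup id).card ≤ 1 ∧
    (∀ S : Finset α, S ⊆ P.sup id → (∀ p ∈ P, (S ∩ p).card = 1) →
      ∃ e ∈ H.E, e ⊆ insert v₀ S)

/-- Maker has a winning *pure* pairing strategy on `H`: there are pairwise disjoint pairs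
of vertices covering all but at most one vertex of `V`, such that any set consisting of
exactly one vertex from each pair contains a hyperedge. -/
def MakerPurePairingWin (H : FinHypergraph α) : Prop :=
  ∃ P : Finset (Finset α),
    (∀ p ∈ P, p.card = 2 ∧ p ⊆ H.V) ∧
    (∀ p ∈ P, ∀ q ∈ P, p ≠ q → Disjoint p q) ∧
    (H.V \ P.sup id).card ≤ 1 ∧
    (∀ S : Finset α, S ⊆ P.sup id → (∀ p ∈ P, (S ∩ p).card = 1) →
      ∃ e ∈ H.E, e ⊆ S)

end FinHypergraph

/-- A literal: a variable (a natural number) together with a polarity. -/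
abbrev Lit : Type := ℕ × Bool

/-- A clause: a finite set of literals. -/
abbrev Clause : Type := Finset Lit

/-- A CNF formula: a finite set of clauses. -/
abbrev CnfFormula : Type := Finset Clause

/-- The literals of a clause are over pairwise distinct variables. -/
def distinctVars (C : Clause) : Prop :=
  ∀ l ∈ C, ∀ l' ∈ C, l.1 = l'.1 → l = l'

/-- A CNF formula is satisfiable if some assignment makes a literal of every clause true. -/
def CnfSatisfiable (F : CnfFormula) : Prop :=
  ∃ σ : ℕ → Bool, ∀ C ∈ F, ∃ l ∈ C, σ l.1 = l.2

/-- The number of clauses of `F` in which the variable `x` occurs (in either polarity). -/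
def varOcc (F : CnfFormula) (x : ℕ) : ℕ :=
  (F.filter fun C => ∃ b : Bool, (x, b) ∈ C).card

/-- The number of clauses of `F` in which the literal `l` occurs. -/
def litOcc (F : CnfFormula) (l : Lit) : ℕ :=
  (F.filter fun C => l ∈ C).card

/-- `F` is a `k`-CNF formula: every clause has exactly `k` literals over distinct variables. -/
def isKCNF (F : CnfFormula) (k : ℕ) : Prop :=
  ∀ C ∈ F, C.card = k ∧ distinctVars C

/-- The number of clauses of `F` distinct from `C` sharing a variable with `C`. -/
def clauseNbhd (F : CnfFormula) (C : Clause) : ℕ :=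
  (F.filter fun D => D ≠ C ∧ ∃ l ∈ C, ∃ b : Bool, (l.1, b) ∈ D).card

/-- The number of distinct variables of `F`. -/
def numVarsCnf (F : CnfFormula) : ℕ := (F.sup fun C => C.image Prod.fst).card

/-- `F` is minimal unsatisfiable. -/
def MinimalUnsat (F : CnfFormula) : Prop :=
  ¬ CnfSatisfiable F ∧ ∀ C ∈ F, CnfSatisfiable (F.erase C)

/-- `F` belongs to MU(1): minimal unsatisfiable with (#clauses) − (#variables) = 1. -/
def MU1 (F : CnfFormula) : Prop :=
  MinimalUnsat F ∧ F.card = numVarsCnf F + 1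

/-!
Vertices are binary words, `u ++ [b]` standing for the tree edge from `u` to its child; the root
`[]` is Maker's first vertex and lies in no hyperedge. Maker pairs the two children of every node,
so a set meeting every pair once contains the whole root path of some choice function `σ`. A word `w` is a leaf when `|w| = m + s + v`, where
`v < 2 ^ s` is the number written in the bits `m, …, m + s - 1` of `w`: leaves form an antichain
that every root path reaches, and the hyperedges are the last `m + s + 1` edges of the paths
through a leaf and one of its children, so Maker's set always contains one.

A vertex at depth `d` only lies in hyperedges of leaves below it of depth `< d + m + s`, i.e. with
`v < d`. Such a leaf is determined by its bits in `[d, m)`, its selector `v` and its last `v` bits,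
so there are fewer than `2 ^ (m - d) * 2 ^ min d (2 ^ s) ≤ 2 ^ m` of them when `2 ^ s ≤ m`, and
every degree is at most `2 ^ (m + 1)`. With `2 ^ (s + 1) < n ≤ 2 ^ (s + 2)` and `n = m + s + 1`
this is `2 ^ (n - s) ≤ 2 ^ (n + 2) / n`.
-/

lemma Finset.sup_id_map_mapEmbedding {α β : Type*} [DecidableEq α] [DecidableEq β]
    (f : α ↪ β) (P : Finset (Finset α)) :
    (P.map (mapEmbedding f).toEmbedding).sup id = (P.sup id).map f := by
  ext y
  simp only [mem_sup, mem_map, id, RelEmbedding.coe_toEmbedding, mapEmbedding_apply]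
  aesop

namespace FinHypergraph

variable {α β : Type*}

def map (f : α ↪ β) (H : FinHypergraph α) : FinHypergraph β where
  V := H.V.map f
  E := H.E.map (mapEmbedding f).toEmbedding

variable (f : α ↪ β) {H : FinHypergraph α}

lemma IsUniform.map {n : ℕ} (hH : H.IsUniform n) : (H.map f).IsUniform n := by
  refine ⟨?_, ?_⟩ <;>
    simp only [FinHypergraph.map, mem_map, RelEmbedding.coe_toEmbedding, mapEmbedding_apply,
      forall_exists_index, and_imp, forall_apply_eq_imp_iff₂]
  · exact fun e he => map_subset_map.2 (hH.1 e he)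
  · exact fun e he => (card_map f).trans (hH.2 e he)

variable [DecidableEq α] [DecidableEq β]

lemma degree_map_le {d : ℕ} (hH : ∀ a, H.degree a ≤ d) (b : β) :
    (H.map f).degree b ≤ d := by
  rw [degree, FinHypergraph.map, filter_map, card_map]
  by_cases hb : ∃ a, f a = b
  · obtain ⟨a, rfl⟩ := hb
    simpa [degree, Function.comp_def] using hH a
  · push Not at hb
    simp [Function.comp_def, hb]

lemma MakerPairingWin.map (hH : H.MakerPairingWin) : (H.map f).MakerPairingWin := by
  obtain ⟨v₀, hv₀, P, hP, hdisj, hcover, hwin⟩ := hH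
  have hV : (H.map f).V.erase (f v₀) = (H.V.erase v₀).map f := (map_erase f H.V v₀).symm
  refine ⟨f v₀, mem_map_of_mem f hv₀, P.map (mapEmbedding f).toEmbedding, ?_, ?_, ?_, ?_⟩
  · simp only [mem_map, RelEmbedding.coe_toEmbedding, mapEmbedding_apply, forall_exists_index,
      and_imp, forall_apply_eq_imp_iff₂, hV, card_map, map_subset_map]
    exact hP
  · simp only [mem_map, RelEmbedding.coe_toEmbedding, mapEmbedding_apply, forall_exists_index,
      and_imp, forall_apply_eq_imp_iff₂, disjoint_map]
    exact fun p hp q hq hpq => hdisj p hp q hq (by rintro rfl; exact hpq rfl)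
  · rwa [hV, sup_id_map_mapEmbedding, ← Finset.map_sdiff, card_map]
  · intro S hS hpairs
    set S' := S.preimage f f.injective.injOn
    have hS' : S' ⊆ P.sup id := fun a ha => by
      have := hS (mem_preimage.1 ha)
      rwa [sup_id_map_mapEmbedding, mem_map'] at this
    obtain ⟨e, he, heS⟩ := hwin S' hS' fun p hp => by
      rw [← card_map f, ← hpairs _ (mem_map_of_mem _ hp)]
      congr 1
      ext y
      simp only [mem_map, mem_inter, S', mem_preimage, RelEmbedding.coe_toEmbedding,
        mapEmbedding_apply]
      aesop
    refine ⟨e.map f, mem_map_of_mem _ he, fun y hy => ?_⟩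
    obtain ⟨a, ha, rfl⟩ := mem_map.1 hy
    rcases mem_insert.1 (heS ha) with rfl | haS
    · exact mem_insert_self _ _
    · exact mem_insert_of_mem (mem_preimage.1 haS)

end FinHypergraph

lemma List.take_eq_take_of_drop_take_eq {α : Type*} {u w : List α} {i k : ℕ}
    (h₁ : u.take i = w.take i) (h₂ : (u.take k).drop i = (w.take k).drop i) :
    u.take k = w.take k := by
  rw [← List.take_append_drop i (u.take k), ← List.take_append_drop i (w.take k), h₂,
    List.take_take, List.take_take, min_comm, ← List.take_take, h₁, List.take_take]

namespace BinaryWord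

def words (k : ℕ) : Finset (List Bool) := univ.image (List.Vector.toList (α := Bool) (n := k))

@[simp] lemma mem_words {k : ℕ} {w : List Bool} : w ∈ words k ↔ w.length = k := by
  simp only [words, mem_image, mem_univ, true_and]
  exact ⟨fun ⟨v, hv⟩ => hv ▸ v.toList_length, fun h => ⟨⟨w, h⟩, rfl⟩⟩

lemma card_words (k : ℕ) : (words k).card = 2 ^ k := by
  rw [words, card_image_of_injective _ List.Vector.toList_injective, card_univ, card_vector,
    Fintype.card_bool]

def wordsBelow (k : ℕ) : Finset (List Bool) := (range k).biUnion words

@[simp] lemma mem_wordsBelow {k : ℕ} {w : List Bool} : w ∈ wordsBelow k ↔ w.length < k := by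
  simp [wordsBelow]

lemma card_wordsBelow_lt (k : ℕ) : (wordsBelow k).card < 2 ^ k :=
  calc (wordsBelow k).card ≤ ∑ i ∈ range k, (words i).card := card_biUnion_le
    _ = ∑ i ∈ range k, 2 ^ i := by simp only [card_words]
    _ < 2 ^ k := Nat.geomSum_lt le_rfl fun _ => mem_range.1

def selectorWord (m s : ℕ) (w : List Bool) : List Bool := (w.take (m + s)).drop m

def selector (m s : ℕ) (w : List Bool) : ℕ :=
  Nat.ofDigits 2 ((selectorWord m s w).map Bool.toNat)

variable {m s : ℕ}

lemma length_selectorWord {w : List Bool} (hw : m + s ≤ w.length) :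
    (selectorWord m s w).length = s := by
  simp [selectorWord]; omega

lemma selector_lt (w : List Bool) : selector m s w < 2 ^ s := by
  refine (Nat.ofDigits_lt_base_pow_length one_lt_two ?_).trans_le
    (Nat.pow_le_pow_right two_pos ?_)
  · exact List.forall_mem_map.2 fun b _ => b.toNat_lt
  · simp [selectorWord]; omega

lemma selectorWord_eq_of_selector_eq {u w : List Bool} (hu : m + s ≤ u.length)
    (hw : m + s ≤ w.length) (h : selector m s u = selector m s w) :
    selectorWord m s u = selectorWord m s w := by
  refine List.map_injective_iff.2 (fun a b h => by cases a <;> cases b <;> simp_all) <|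
    Nat.ofDigits_inj_of_len_eq one_lt_two ?_ ?_ ?_ h
  · simp [length_selectorWord hu, length_selectorWord hw]
  all_goals exact List.forall_mem_map.2 fun b _ => b.toNat_lt

lemma selectorWord_eq_of_prefix {u w : List Bool} (h : u <+: w) (hu : m + s ≤ u.length) :
    selectorWord m s u = selectorWord m s w := by
  rw [selectorWord, selectorWord, List.prefix_iff_eq_take.1 h, List.take_take,
    min_eq_left hu]

lemma selector_eq_of_prefix {u w : List Bool} (h : u <+: w) (hu : m + s ≤ u.length) :
    selector m s u = selector m s w := by
  rw [selector, selector, selectorWord_eq_of_prefix h hu]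

def IsLeaf (m s : ℕ) (w : List Bool) : Prop := w.length = m + s + selector m s w

instance : DecidablePred (IsLeaf m s) := fun _ => inferInstanceAs (Decidable (_ = _))

lemma IsLeaf.length_lt {w : List Bool} (hw : IsLeaf m s w) : w.length < m + s + 2 ^ s := by
  have := selector_lt (m := m) (s := s) w; rw [hw]; omega

lemma IsLeaf.eq_of_prefix {u w : List Bool} (hu : IsLeaf m s u) (hw : IsLeaf m s w)
    (h : u <+: w) : u = w :=
  h.eq_of_length <| by rw [hu, hw, selector_eq_of_prefix h (by rw [hu]; omega)]

def leaves (m s : ℕ) : Finset (List Bool) := (wordsBelow (m + s + 2 ^ s)).filter (IsLeaf m s)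

@[simp] lemma mem_leaves {w : List Bool} : w ∈ leaves m s ↔ IsLeaf m s w := by
  simpa [leaves] using IsLeaf.length_lt

lemma card_filter_leaves_prefix_le (hs : 2 ^ s ≤ m) (x : List Bool) :
    ((leaves m s).filter fun w => x <+: w ∧ w.length < x.length + m + s).card ≤ 2 ^ m := by
  set δ := x.length
  calc _ ≤ (words (m - δ) ×ˢ wordsBelow (min δ (2 ^ s))).card := by
        refine card_le_card_of_injOn (fun w => ((w.take m).drop δ, w.drop (m + s))) ?_ ?_
        · intro w hw
          simp only [coe_filter, mem_leaves, Set.mem_ofPred_eq] at hw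
          obtain ⟨hleaf, -, hlen⟩ := hw
          rw [IsLeaf] at hleaf
          have := selector_lt (m := m) (s := s) w
          simp only [coe_product, Set.mem_prod, mem_coe, mem_words, mem_wordsBelow,
            List.length_drop, List.length_take]
          omega
        · intro w hw w' hw' h
          simp only [coe_filter, mem_leaves, Set.mem_ofPred_eq] at hw hw'
          obtain ⟨hleaf, hpre, -⟩ := hw
          obtain ⟨hleaf', hpre', -⟩ := hw'
          rw [IsLeaf] at hleaf hleaf'
          simp only [Prod.mk.injEq] at h
          have hsel : selector m s w = selector m s w' := by
            have := congrArg List.length h.2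
            simp only [List.length_drop] at this
            omega
          have htake_m := List.take_eq_take_of_drop_take_eq
            ((List.prefix_iff_eq_take.1 hpre).symm.trans (List.prefix_iff_eq_take.1 hpre')) h.1
          have htake_ms := List.take_eq_take_of_drop_take_eq htake_m
            (selectorWord_eq_of_selector_eq (by omega) (by omega) hsel)
          rw [← List.take_append_drop (m + s) w, ← List.take_append_drop (m + s) w', htake_ms,
            h.2]
    _ = 2 ^ (m - δ) * (wordsBelow (min δ (2 ^ s))).card := by rw [card_product, card_words]
    _ ≤ 2 ^ (m - δ) * 2 ^ min δ (2 ^ s) := Nat.mul_le_mul_left _ (card_wordsBelow_lt _).le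
    _ ≤ 2 ^ m := by rw [← pow_add]; exact Nat.pow_le_pow_right two_pos (by omega)

def window (n : ℕ) (y : List Bool) : Finset (List Bool) :=
  (Ioc (y.length - n) y.length).image y.take

lemma mem_window {n : ℕ} {u y : List Bool} :
    u ∈ window n y ↔ u <+: y ∧ y.length - n < u.length := by
  simp only [window, mem_image, mem_Ioc]
  constructor
  · rintro ⟨j, ⟨hj, hjy⟩, rfl⟩
    exact ⟨List.take_prefix _ _, by simpa [hjy] using hj⟩
  · rintro ⟨hu, hlen⟩
    exact ⟨u.length, ⟨hlen, hu.length_le⟩, (List.prefix_iff_eq_take.1 hu).symm⟩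

lemma card_window {n : ℕ} {y : List Bool} (h : n ≤ y.length) : (window n y).card = n := by
  rw [window, card_image_of_injOn, Nat.card_Ioc]
  · omega
  · intro i hi j hj hij
    simp only [coe_Ioc, Set.mem_Ioc] at hi hj
    simpa [hi.2, hj.2] using congrArg List.length hij

def treePath (σ : List Bool → Bool) : ℕ → List Bool
  | 0 => []
  | t + 1 => treePath σ t ++ [σ (treePath σ t)]

variable (σ : List Bool → Bool)

@[simp] lemma length_treePath (t : ℕ) : (treePath σ t).length = t := by
  induction t with
  | zero => rfl
  | succ t ih => simp [treePath, ih]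

lemma take_treePath {t t' : ℕ} (h : t ≤ t') : (treePath σ t').take t = treePath σ t := by
  induction t' with
  | zero => rw [Nat.le_zero.1 h]; rfl
  | succ t' ih =>
    rcases h.lt_or_eq with h | rfl
    · rw [treePath, List.take_append_of_le_length (by simp; omega), ih (by omega)]
    · exact List.take_of_length_le (by simp)

lemma treePath_prefix {t t' : ℕ} (h : t ≤ t') : treePath σ t <+: treePath σ t' :=
  take_treePath σ h ▸ List.take_prefix _ _

lemma isLeaf_treePath : IsLeaf m s (treePath σ (m + s + selector m s (treePath σ (m + s)))) := by
  have hsel := selector_eq_of_prefix (m := m) (s := s)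
    (treePath_prefix σ (Nat.le_add_right (m + s) (selector m s (treePath σ (m + s))))) (by simp)
  rw [IsLeaf, length_treePath, ← hsel]

def treeHypergraph (m s : ℕ) : FinHypergraph (List Bool) where
  V := wordsBelow (m + s + 2 ^ s + 1)
  E := (leaves m s ×ˢ univ).image fun p => window (m + s + 1) (p.1 ++ [p.2])

lemma isUniform_treeHypergraph : (treeHypergraph m s).IsUniform (m + s + 1) := by
  refine ⟨?_, ?_⟩ <;> simp only [treeHypergraph, mem_image, mem_product, mem_leaves, mem_univ,
    and_true, Prod.exists, forall_exists_index, and_imp]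
  · rintro _ w c hw rfl u hu
    have := (mem_window.1 hu).1.length_le
    have := hw.length_lt
    simp only [mem_wordsBelow, List.length_append, List.length_singleton] at *
    omega
  · rintro _ w c hw rfl
    exact card_window (by rw [List.length_append, hw]; simp)

lemma degree_treeHypergraph_le (hs : 2 ^ s ≤ m) (u : List Bool) :
    (treeHypergraph m s).degree u ≤ 2 ^ (m + 1) := by
  have hedges : (treeHypergraph m s).degree u ≤ ((leaves m s ×ˢ univ).filter
      fun p : List Bool × Bool => u ∈ window (m + s + 1) (p.1 ++ [p.2])).card := by
    rw [FinHypergraph.degree, treeHypergraph, filter_image]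
    exact card_image_le
  refine hedges.trans ?_
  by_cases hu : ∃ w c, IsLeaf m s w ∧ u = w ++ [c]
  · obtain ⟨w₀, c₀, hw₀, rfl⟩ := hu
    calc _ ≤ ({(w₀, c₀)} : Finset _).card := card_le_card fun ⟨w, c⟩ h => ?_
      _ ≤ 2 ^ (m + 1) := by simp [Nat.one_le_two_pow]
    simp only [mem_filter, mem_product, mem_leaves, mem_window] at h
    obtain ⟨⟨hw, -⟩, hpre, -⟩ := h
    rcases List.prefix_concat_iff.1 hpre with heq | hpre
    · simp_all
    · have := (hw₀.eq_of_prefix hw ((List.prefix_append _ _).trans hpre)) ▸ hpre.length_le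
      simp at this
  · calc _ ≤ (((leaves m s).filter fun w => u <+: w ∧ w.length < u.length + m + s) ×ˢ
          (univ : Finset Bool)).card := card_le_card fun ⟨w, c⟩ h => ?_
      _ ≤ 2 ^ m * 2 := by
        rw [card_product]
        exact Nat.mul_le_mul (card_filter_leaves_prefix_le hs u) (by simp)
      _ = 2 ^ (m + 1) := (pow_succ 2 m).symm
    simp only [mem_filter, mem_product, mem_leaves, mem_window, mem_univ, and_true] at h ⊢
    obtain ⟨hw, hpre, hlen⟩ := h
    rcases List.prefix_concat_iff.1 hpre with rfl | hpre
    · exact absurd ⟨w, c, hw, rfl⟩ hu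
    · simp only [List.length_append, List.length_singleton] at hlen
      exact ⟨hw, hpre, by omega⟩

lemma exists_edge_subset_of_forall_concat_mem {S : Finset (List Bool)}
    (hσ : ∀ u : List Bool, u.length < m + s + 2 ^ s → u ++ [σ u] ∈ S) :
    ∃ e ∈ (treeHypergraph m s).E, e ⊆ S := by
  set t := m + s + selector m s (treePath σ (m + s))
  have hleaf : IsLeaf m s (treePath σ t) := isLeaf_treePath σ
  have ht : t < m + s + 2 ^ s := by simpa using hleaf.length_lt
  refine ⟨window (m + s + 1) (treePath σ t ++ [σ (treePath σ t)]),
    mem_image.2 ⟨(treePath σ t, σ (treePath σ t)), by simpa using hleaf, rfl⟩,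
    fun y hy => ?_⟩
  obtain ⟨hpre, hlen⟩ := mem_window.1 hy
  rw [show treePath σ t ++ [σ (treePath σ t)] = treePath σ (t + 1) from rfl] at hpre hlen
  obtain ⟨j, hj⟩ : ∃ j, y.length = j + 1 := Nat.exists_eq_succ_of_ne_zero (by omega)
  have hjt : j + 1 ≤ t + 1 := by simpa [hj] using hpre.length_le
  rw [List.prefix_iff_eq_take.1 hpre, hj, take_treePath σ hjt]
  exact hσ _ (by simp; omega)

def childPairs (k : ℕ) : Finset (Finset (List Bool)) :=
  (wordsBelow k).image fun u => {u ++ [false], u ++ [true]}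

lemma sup_id_childPairs (k : ℕ) : (childPairs k).sup id = (wordsBelow (k + 1)).erase [] := by
  ext y
  simp only [childPairs, mem_sup, mem_image, id, mem_erase, mem_wordsBelow]
  constructor
  · rintro ⟨_, ⟨u, hu, rfl⟩, hy⟩
    rcases mem_insert.1 hy with rfl | hy
    · simpa using hu
    · simpa [mem_singleton.1 hy] using hu
  · rintro ⟨hne, hlen⟩
    obtain ⟨u, b, rfl⟩ := (List.eq_nil_or_concat y).resolve_left hne
    exact ⟨_, ⟨u, by simpa using hlen, rfl⟩, by cases b <;> simp⟩

lemma pairwise_disjoint_childPairs {k : ℕ} {p q : Finset (List Bool)} (hp : p ∈ childPairs k)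
    (hq : q ∈ childPairs k) (hpq : p ≠ q) : Disjoint p q := by
  obtain ⟨u, -, rfl⟩ := mem_image.1 hp
  obtain ⟨u', -, rfl⟩ := mem_image.1 hq
  refine disjoint_left.2 fun a ha ha' => hpq ?_
  simp only [mem_insert, mem_singleton] at ha ha'
  obtain rfl : u = u' := by
    rcases ha with rfl | rfl <;> rcases ha' with h | h <;> simpa using congrArg List.dropLast h
  rfl

lemma concat_decide_mem {S : Finset (List Bool)} {u : List Bool}
    (hS : (S ∩ {u ++ [false], u ++ [true]}).card = 1) :
    u ++ [decide (u ++ [true] ∈ S)] ∈ S := by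
  by_cases ht : u ++ [true] ∈ S
  · simp [ht]
  obtain ⟨y, hy⟩ := card_pos.1 (hS.symm ▸ one_pos)
  obtain ⟨hyS, hy⟩ := mem_inter.1 hy
  rcases mem_insert.1 hy with rfl | hy
  · simpa [ht] using hyS
  · exact absurd (mem_singleton.1 hy ▸ hyS) ht

lemma makerPairingWin_treeHypergraph : (treeHypergraph m s).MakerPairingWin := by
  have hsup : (childPairs (m + s + 2 ^ s)).sup id = (treeHypergraph m s).V.erase [] :=
    sup_id_childPairs _
  refine ⟨[], by simp [treeHypergraph], childPairs (m + s + 2 ^ s),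
    fun p hp => ⟨?_, hsup ▸ le_sup (f := id) hp⟩,
    fun p hp q hq => pairwise_disjoint_childPairs hp hq, by simp [hsup], fun S _ hS => ?_⟩
  · obtain ⟨u, -, rfl⟩ := mem_image.1 hp
    exact card_pair (by simp)
  · obtain ⟨e, he, heS⟩ := exists_edge_subset_of_forall_concat_mem (S := S) _
      fun u hu => concat_decide_mem (hS _ (mem_image_of_mem _ (mem_wordsBelow.2 hu)))
    exact ⟨e, he, heS.trans (subset_insert _ _)⟩

end BinaryWord

lemma exists_two_pow_succ_lt_and_le_two_pow_add_two {n : ℕ} (hn : 3 ≤ n) :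
    ∃ s, 2 ^ (s + 1) < n ∧ n ≤ 2 ^ (s + 2) := by
  obtain ⟨s, hs⟩ : ∃ s, Nat.log 2 (n - 1) = s + 1 :=
    Nat.exists_eq_add_one.2 (Nat.log_pos one_lt_two (by omega))
  have hlow := Nat.pow_log_le_self 2 (show n - 1 ≠ 0 by omega)
  have hhigh := Nat.lt_pow_succ_log_self one_lt_two (n - 1)
  rw [hs, pow_succ 2 (s + 1)] at hhigh
  rw [hs] at hlow
  exact ⟨s, by omega, by rw [pow_succ 2 (s + 1)]; omega⟩

/-- For every `n ≥ 4` there is an `n`-uniform hypergraph with maximum degree at most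
`2^(n+2)/n` on which Maker has a winning pairing strategy. -/
theorem maker_win_with_max_degree_four_two_pow_div_n (n : ℕ) (hn : 4 ≤ n) :
    ∃ H : FinHypergraph ℕ, H.IsUniform n ∧
      (∀ v : ℕ, (H.degree v : ℝ) ≤ 2 ^ (n + 2) / (n : ℝ)) ∧
      H.MakerPairingWin := by
  obtain ⟨s, hs_lt, hs_le⟩ := exists_two_pow_succ_lt_and_le_two_pow_add_two (by omega : 3 ≤ n)
  have hs : s < 2 ^ s := Nat.lt_two_pow_self
  rw [pow_succ] at hs_lt
  obtain ⟨m, rfl⟩ : ∃ m, n = m + s + 1 := ⟨n - 1 - s, by omega⟩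
  have hsm : 2 ^ s ≤ m := by omega
  let f := Encodable.encode' (List Bool)
  refine ⟨(BinaryWord.treeHypergraph m s).map f, BinaryWord.isUniform_treeHypergraph.map f,
    fun v => ?_, BinaryWord.makerPairingWin_treeHypergraph.map f⟩
  have hdeg := FinHypergraph.degree_map_le f (BinaryWord.degree_treeHypergraph_le hsm) v
  have hpow : 2 ^ (m + 1) * (m + s + 1) ≤ 2 ^ (m + s + 1 + 2) :=
    calc _ ≤ 2 ^ (m + 1) * 2 ^ (s + 2) := Nat.mul_le_mul_left _ hs_le
      _ = 2 ^ (m + s + 1 + 2) := by rw [← pow_add]; ring_nf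
  rw [le_div_iff₀ (by positivity)]
  exact_mod_cast (Nat.mul_le_mul_right _ hdeg).trans hpow
end

section
/- For every n-uniform hypergraph F whose maximum degree is at most 2^(n-2)/(e·n), where e denotes Euler's number (e = exp 1), there exists a proper halving 2-coloring, i.e. a 2-coloring of the vertices of F in which no hyperedge is monochromatic and the sizes of the two color classes differ by at most 1. -/
/-!
Pair up the vertices (at most one stays unpaired and is coloured `true`) and colour the `i`-th
pair by a fair coin `σ i`: one vertex gets `σ i`, its mate `!σ i`. Every such colouring is
halving, so it remains to choose the coins so that no hyperedge is monochromatic. The event that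
a hyperedge `e` is monochromatic has probability at most `2 ^ (1 - n)` and depends only on the
coins of the pairs meeting `e`. Every other hyperedge sharing such a pair meets the at most `2n`
vertices of these pairs, so by the degree bound there are at most `2 ^ (n - 1) / e - n` of them.
The symmetric Lovász Local Lemma `e p (d + 1) ≤ 1` then provides the coins.
-/

open Finset

section LocalLemma

variable {β γ : Type*} [Fintype β] [DecidableEq β] [Fintype γ]

theorem card_mul_pow_card_le_of_eqOn {S : Finset (β → γ)} {J : Finset β}
    (hS : ∀ σ ∈ S, ∀ τ ∈ S, ∀ j ∈ J, σ j = τ j) :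
    #S * Fintype.card γ ^ #J ≤ Fintype.card (β → γ) := by
  rcases S.eq_empty_or_nonempty with rfl | ⟨σ₀, hσ₀⟩
  · simp
  set P := Fintype.piFinset fun j => if j ∈ J then {σ₀ j} else (univ : Finset γ)
  have hsub : S ⊆ P := by
    intro σ hσ
    rw [Fintype.mem_piFinset]
    intro j
    split_ifs with hj
    · exact mem_singleton.mpr (hS σ hσ σ₀ hσ₀ j hj)
    · exact mem_univ _
  calc #S * Fintype.card γ ^ #J ≤ #P * Fintype.card γ ^ #J := by gcongr
    _ = Fintype.card γ ^ #Jᶜ * Fintype.card γ ^ #J := by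
        simp [P, apply_ite, prod_ite, compl_eq_univ_sdiff, filter_not]
    _ = Fintype.card (β → γ) := by rw [← pow_add, card_compl_add_card, Fintype.card_fun]

variable [DecidableEq γ]

theorem card_inter_mul_card_eq_of_dependsOn {A B : Finset (β → γ)} {J K : Finset β}
    (hA : DependsOn (· ∈ A) (J : Set β)) (hB : DependsOn (· ∈ B) (K : Set β))
    (hJK : Disjoint J K) :
    #(A ∩ B) * Fintype.card (β → γ) = #A * #B := by
  -- exchanging the `J`-coordinates maps `(A ∩ B) × univ` bijectively onto `A × B`
  let splice (p : (β → γ) × (β → γ)) : (β → γ) × (β → γ) :=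
    (fun j => if j ∈ J then p.1 j else p.2 j, fun j => if j ∈ J then p.2 j else p.1 j)
  have splice_splice (p) : splice (splice p) = p := by
    ext j <;> by_cases hj : j ∈ J <;> simp [splice, hj]
  have hK (j) (hj : j ∈ K) : j ∉ J := disjoint_right.mp hJK hj
  rw [Fintype.card, ← card_product, ← card_product]
  refine card_nbij' splice splice (fun p hp => ?_) (fun p hp => ?_)
    (fun p _ => splice_splice p) (fun p _ => splice_splice p)
  · simp only [coe_product, Set.mem_prod, mem_coe, mem_inter] at hp ⊢
    exact ⟨Eq.mp (hA fun j hj => by simp [splice, mem_coe.mp hj]) hp.1.1,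
      Eq.mp (hB fun j hj => by simp [splice, hK j hj]) hp.1.2⟩
  · simp only [coe_product, Set.mem_prod, mem_coe, mem_inter, coe_univ, Set.mem_univ,
      and_true] at hp ⊢
    exact ⟨Eq.mp (hA fun j hj => by simp [splice, mem_coe.mp hj]) hp.1,
      Eq.mp (hB fun j hj => by simp [splice, hK j hj]) hp.2⟩

variable {ι : Type*}

def avoiding (A : ι → Finset (β → γ)) (T : Finset ι) : Finset (β → γ) :=
  {σ | ∀ i ∈ T, σ ∉ A i}

variable (A : ι → Finset (β → γ))

theorem avoiding_anti {T U : Finset ι} (h : T ⊆ U) : avoiding A U ⊆ avoiding A T := by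
  intro σ
  simp only [avoiding, mem_filter, mem_univ, true_and]
  exact fun hσ i hi => hσ i (h hi)

theorem dependsOn_avoiding {vbl : ι → Finset β} {T : Finset ι}
    (hA : ∀ i ∈ T, DependsOn (· ∈ A i) (vbl i : Set β)) :
    DependsOn (· ∈ avoiding A T) (T.biUnion vbl : Set β) := by
  intro σ τ h
  simp only [avoiding, mem_filter, mem_univ, true_and, eq_iff_iff]
  refine forall₂_congr fun i hi => not_congr (eq_iff_iff.mp (hA i hi fun j hj => h j ?_))
  exact mem_coe.mpr (mem_biUnion.mpr ⟨i, hi, hj⟩)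

variable [DecidableEq ι]

def dependencyNeighbors (I : Finset ι) (vbl : ι → Finset β) (i : ι) : Finset ι :=
  {j ∈ I.erase i | ¬Disjoint (vbl j) (vbl i)}

theorem avoiding_insert (a : ι) (T : Finset ι) :
    avoiding A (insert a T) = avoiding A T \ A a := by
  ext σ
  simp only [avoiding, mem_filter, mem_univ, true_and, mem_sdiff, forall_mem_insert]
  tauto

variable {A} {x : ℝ}

theorem one_sub_mul_card_avoiding_le_insert {a : ι} {T : Finset ι}
    (h : (#(A a ∩ avoiding A T) : ℝ) ≤ x * #(avoiding A T)) :
    (1 - x) * #(avoiding A T) ≤ #(avoiding A (insert a T)) := by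
  have hsplit : (#(avoiding A T) : ℝ) = #(A a ∩ avoiding A T) + #(avoiding A T \ A a) := by
    rw [inter_comm]
    exact_mod_cast (card_inter_add_card_sdiff _ _).symm
  rw [avoiding_insert]
  linarith

theorem one_sub_pow_mul_card_avoiding_le_union {U S : Finset ι} (hx : x ≤ 1)
    (hUS : Disjoint U S)
    (hstep : ∀ a ∈ S, ∀ T, U ⊆ T → T ⊆ U ∪ S → a ∉ T →
      (#(A a ∩ avoiding A T) : ℝ) ≤ x * #(avoiding A T)) :
    (1 - x) ^ #S * #(avoiding A U) ≤ #(avoiding A (U ∪ S)) := by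
  induction S using Finset.induction_on with
  | empty => simp
  | @insert a S ha ih =>
    have haU : a ∉ U := disjoint_right.mp hUS (mem_insert_self a S)
    have hUS' : Disjoint U S := hUS.mono_right (subset_insert a S)
    have hS : U ∪ S ⊆ U ∪ insert a S := union_subset_union_right (subset_insert a S)
    have ih := ih hUS' fun b hb T hUT hTS hbT =>
      hstep b (mem_insert_of_mem hb) T hUT (hTS.trans hS) hbT
    have hstep_a := hstep a (mem_insert_self a S) (U ∪ S) subset_union_left hS
      (by simp [haU, ha])
    rw [union_insert, card_insert_of_notMem ha, pow_succ', mul_assoc]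
    exact (mul_le_mul_of_nonneg_left ih (sub_nonneg.mpr hx)).trans
      (one_sub_mul_card_avoiding_le_insert hstep_a)

variable [Nonempty γ] {I : Finset ι} {vbl : ι → Finset β} {D : ℕ}

theorem card_inter_avoiding_le (hA : ∀ i ∈ I, DependsOn (· ∈ A i) (vbl i : Set β))
    (hx₀ : 0 ≤ x) (hx₁ : x ≤ 1) (hD : ∀ i ∈ I, #(dependencyNeighbors I vbl i) ≤ D)
    (hp : ∀ i ∈ I, (#(A i) : ℝ) ≤ x * (1 - x) ^ D * Fintype.card (β → γ))
    (T : Finset ι) (hT : T ⊆ I) {i : ι} (hi : i ∈ I) (hiT : i ∉ T) :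
    (#(A i ∩ avoiding A T) : ℝ) ≤ x * #(avoiding A T) := by
  induction T using Finset.strongInduction generalizing i with
  | H T ih =>
  -- avoiding the `far` events does not change the probability of `A i`, and avoiding each
  -- `near` event costs at most a factor `1 - x`
  set near := {j ∈ T | ¬Disjoint (vbl j) (vbl i)}
  set far := {j ∈ T | Disjoint (vbl j) (vbl i)}
  have hnear : #near ≤ D := by
    refine (card_le_card fun j hj => ?_).trans (hD i hi)
    obtain ⟨hjT, hji⟩ := mem_filter.mp hj
    exact mem_filter.mpr ⟨mem_erase.mpr ⟨ne_of_mem_of_not_mem hjT hiT, hT hjT⟩, hji⟩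
  have hindep : (#(A i ∩ avoiding A far) : ℝ) * Fintype.card (β → γ)
      = #(A i) * #(avoiding A far) := by
    exact_mod_cast card_inter_mul_card_eq_of_dependsOn (hA i hi)
      (dependsOn_avoiding A fun j hj => hA j (hT (filter_subset _ _ hj)))
      ((disjoint_biUnion_right (vbl i) far vbl).mpr fun j hj => (mem_filter.mp hj).2.symm)
  have hsplit : far ∪ near = T := filter_union_filter_not_eq _ _
  have hgrow : (1 - x) ^ #near * #(avoiding A far) ≤ #(avoiding A T) := by
    rw [← hsplit]
    refine one_sub_pow_mul_card_avoiding_le_union hx₁ (disjoint_filter_filter_not T T _)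
      fun a ha T' _ hT' haT' => ?_
    rw [hsplit] at hT'
    have haT : a ∈ T := filter_subset _ _ ha
    exact ih T' (ssubset_of_subset_of_ne hT' (by rintro rfl; exact haT' haT)) (hT'.trans hT)
      (hT haT) haT'
  have hΩ : (0 : ℝ) < Fintype.card (β → γ) := by exact_mod_cast Fintype.card_pos
  calc (#(A i ∩ avoiding A T) : ℝ)
      ≤ #(A i ∩ avoiding A far) := by
        gcongr
        exact avoiding_anti A (filter_subset _ _)
    _ ≤ x * (1 - x) ^ D * #(avoiding A far) := by
        refine le_of_mul_le_mul_right ?_ hΩ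
        rw [hindep, mul_right_comm]
        gcongr
        exact hp i hi
    _ ≤ x * ((1 - x) ^ #near * #(avoiding A far)) := by
        rw [mul_assoc]
        gcongr x * (?_ * _)
        exact pow_le_pow_of_le_one (sub_nonneg.mpr hx₁) (by linarith) hnear
    _ ≤ x * #(avoiding A T) := by gcongr

theorem lovasz_local_lemma (hA : ∀ i ∈ I, DependsOn (· ∈ A i) (vbl i : Set β))
    (hx₀ : 0 ≤ x) (hx₁ : x < 1) (hD : ∀ i ∈ I, #(dependencyNeighbors I vbl i) ≤ D)
    (hp : ∀ i ∈ I, (#(A i) : ℝ) ≤ x * (1 - x) ^ D * Fintype.card (β → γ)) :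
    ∃ σ : β → γ, ∀ i ∈ I, σ ∉ A i := by
  have hgrow := one_sub_pow_mul_card_avoiding_le_union (U := ∅) (S := I) hx₁.le
    (disjoint_empty_left I) fun a ha T _ hT haT =>
      card_inter_avoiding_le hA hx₀ hx₁.le hD hp T (by simpa using hT) ha haT
  have hpos : (0 : ℝ) < (1 - x) ^ #I * #(avoiding A ∅) := by
    have : avoiding A ∅ = univ := by simp [avoiding]
    rw [this, card_univ]
    have : (0 : ℝ) < Fintype.card (β → γ) := by exact_mod_cast Fintype.card_pos
    have : (0 : ℝ) < 1 - x := by linarith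
    positivity
  rw [empty_union] at hgrow
  obtain ⟨σ, hσ⟩ := card_pos.mp (by exact_mod_cast hpos.trans_le hgrow)
  exact ⟨σ, by simpa [avoiding] using hσ⟩

theorem lovasz_local_lemma_symmetric (hA : ∀ i ∈ I, DependsOn (· ∈ A i) (vbl i : Set β))
    (hD : ∀ i ∈ I, #(dependencyNeighbors I vbl i) ≤ D)
    (hp : ∀ i ∈ I, Real.exp 1 * (D + 1) * #(A i) ≤ Fintype.card (β → γ)) :
    ∃ σ : β → γ, ∀ i ∈ I, σ ∉ A i := by
  -- with `x = 1 / (D + 2)` the condition reduces to `(1 + 1 / (D + 1)) ^ (D + 1) ≤ e`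
  set x : ℝ := ((D : ℝ) + 2)⁻¹
  have hx₁ : x < 1 := inv_lt_one_of_one_lt₀ (by linarith [D.cast_nonneg (α := ℝ)])
  have hDx : (D + 1 : ℝ) * x = 1 - x := by
    simp only [x]; field_simp; ring
  have hkey : 1 ≤ Real.exp 1 * (D + 1) * (x * (1 - x) ^ D) := by
    have h1x : 1 - x = (1 + ((D + 1 : ℕ) : ℝ)⁻¹)⁻¹ := by
      simp only [x]; push_cast; field_simp; ring
    calc 1 ≤ Real.exp 1 * (1 - x) ^ (D + 1) := by
          rw [h1x, inv_pow, ← div_eq_mul_inv, one_le_div (by positivity)]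
          exact Real.one_add_inv_pow_le_exp
      _ = Real.exp 1 * (D + 1) * (x * (1 - x) ^ D) := by rw [pow_succ', ← hDx]; ring
  refine lovasz_local_lemma hA (by positivity) hx₁ hD fun i hi => ?_
  calc (#(A i) : ℝ) ≤ #(A i) * (Real.exp 1 * (D + 1) * (x * (1 - x) ^ D)) :=
        le_mul_of_one_le_right (Nat.cast_nonneg _) hkey
    _ = Real.exp 1 * (D + 1) * #(A i) * (x * (1 - x) ^ D) := by ring
    _ ≤ Fintype.card (β → γ) * (x * (1 - x) ^ D) :=
        mul_le_mul_of_nonneg_right (hp i hi)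
          (mul_nonneg (by positivity) (pow_nonneg (by linarith) _))
    _ = x * (1 - x) ^ D * Fintype.card (β → γ) := by ring

end LocalLemma

namespace FinHypergraph

variable {α : Type*} [DecidableEq α] (H : FinHypergraph α)

theorem sum_degree_eq_sum_card_inter (W : Finset α) :
    ∑ w ∈ W, H.degree w = ∑ e ∈ H.E, #(W ∩ e) := by
  simp_rw [degree, ← filter_mem_eq_inter, card_eq_sum_ones, sum_filter]
  exact sum_comm

theorem card_add_card_filter_not_disjoint_le_sum_degree {e W : Finset α} (he : e ∈ H.E)
    (heW : e ⊆ W) : #e + #{e' ∈ H.E.erase e | ¬Disjoint e' W} ≤ ∑ w ∈ W, H.degree w := by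
  rw [sum_degree_eq_sum_card_inter, ← add_sum_erase _ _ he, inter_eq_right.mpr heW, card_filter]
  gcongr with e' _
  split_ifs with h
  · exact Nat.zero_le _
  · rw [inter_comm]
    exact card_pos.mpr (not_disjoint_iff_nonempty_inter.mp h)

end FinHypergraph

section Pairing

variable {α β : Type*}

theorem exists_pairing (V : Finset α) :
    ∃ (m : ℕ) (f : Fin m × Bool ↪ α), (∀ p, f p ∈ V) ∧ #V ≤ 2 * m + 1 := by
  have hm : #V / 2 * 2 ≤ #V := Nat.div_mul_le_self _ _
  -- `(i, s) ↦ 2 i + s`, followed by an enumeration of `V`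
  refine ⟨#V / 2, ((((Equiv.refl _).prodCongr finTwoEquiv.symm).trans
    finProdFinEquiv).toEmbedding.trans (Fin.castLEEmb hm)).trans
    (V.equivFin.symm.toEmbedding.trans (Function.Embedding.subtype _)),
    fun p => (V.equivFin.symm _).2, by omega⟩

variable (f : β × Bool ↪ α)

/-- The vertices `f (i, false)` and `f (i, true)` form the `i`-th pair; they get the colours
`σ i` and `!σ i`, and unpaired vertices get `true`. -/
noncomputable def pairColoring (σ : β → Bool) : α → Bool :=
  Function.extend f (fun p => xor (σ p.1) p.2) fun _ => true

theorem pairColoring_apply (σ : β → Bool) (p : β × Bool) :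
    pairColoring f σ (f p) = xor (σ p.1) p.2 :=
  f.injective.extend_apply _ _ _

theorem pairColoring_of_notMem_range (σ : β → Bool) {v : α} (hv : v ∉ Set.range f) :
    pairColoring f σ v = true :=
  Function.extend_apply' _ _ _ hv

noncomputable def pairMate (v : α) : α := Function.extend f (fun p => f (p.1, !p.2)) id v

theorem pairMate_apply (p : β × Bool) : pairMate f (f p) = f (p.1, !p.2) :=
  f.injective.extend_apply _ _ _

section
variable [DecidableEq α]

noncomputable def pairClosure (e : Finset α) : Finset α := e.biUnion fun v => {v, pairMate f v}

theorem card_pairClosure_le (e : Finset α) : #(pairClosure f e) ≤ 2 * #e :=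
  card_biUnion_le.trans (by simpa [mul_comm] using sum_le_sum fun v (_ : v ∈ e) => card_le_two)

theorem subset_pairClosure (e : Finset α) : e ⊆ pairClosure f e :=
  fun v hv => mem_biUnion.mpr ⟨v, hv, mem_insert_self _ _⟩

theorem apply_mem_pairClosure {e : Finset α} {i : β} {s : Bool} (h : f (i, s) ∈ e) (t : Bool) :
    f (i, t) ∈ pairClosure f e := by
  refine mem_biUnion.mpr ⟨_, h, ?_⟩
  cases s <;> cases t <;> simp [pairMate_apply]

end

variable [Fintype β]

theorem card_le_card_filter_pairColoring {V : Finset α} (hfV : ∀ p, f p ∈ V)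
    (σ : β → Bool) (b : Bool) : Fintype.card β ≤ #{v ∈ V | pairColoring f σ v = b} := by
  refine card_le_card_of_injOn (fun i => f (i, xor (σ i) b)) (fun i _ => ?_) fun i _ j _ h => ?_
  · exact mem_coe.mpr (mem_filter.mpr ⟨hfV _, by simp [pairColoring_apply]⟩)
  · exact (Prod.ext_iff.mp (f.injective h)).1

theorem abs_card_filter_pairColoring_sub_le {V : Finset α} (hfV : ∀ p, f p ∈ V)
    (hV : #V ≤ 2 * Fintype.card β + 1) (σ : β → Bool) :
    |(#{v ∈ V | pairColoring f σ v = true} : ℤ) - #{v ∈ V | pairColoring f σ v = false}|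
      ≤ 1 := by
  have htrue := card_le_card_filter_pairColoring f hfV σ true
  have hfalse := card_le_card_filter_pairColoring f hfV σ false
  have hsum : #{v ∈ V | pairColoring f σ v = true} + #{v ∈ V | pairColoring f σ v = false}
      = #V := by
    simpa using card_filter_add_card_filter_not (s := V) (fun v => pairColoring f σ v = true)
  rw [abs_le]
  constructor <;> omega

section
variable [DecidableEq α]

theorem card_sdiff_map_le_one {V e : Finset α} (hfV : ∀ p, f p ∈ V)
    (hV : #V ≤ 2 * Fintype.card β + 1) (he : e ⊆ V) : #(e \ univ.map f) ≤ 1 := by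
  have hmap : univ.map f ⊆ V := fun v hv => by
    obtain ⟨p, -, rfl⟩ := mem_map.mp hv
    exact hfV p
  calc #(e \ univ.map f) ≤ #(V \ univ.map f) := card_le_card (sdiff_subset_sdiff he le_rfl)
    _ ≤ 1 := by
      rw [card_sdiff_of_subset hmap, card_map, card_univ, Fintype.card_prod, Fintype.card_bool]
      omega

theorem card_le_card_filter_add_card_sdiff_map (e : Finset α) :
    #e ≤ #{p : β × Bool | f p ∈ e} + #(e \ univ.map f) := by
  have hcover : e ⊆ ({p : β × Bool | f p ∈ e} : Finset _).map f ∪ (e \ univ.map f) := by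
    intro v hv
    by_cases hvf : v ∈ univ.map f
    · obtain ⟨p, -, rfl⟩ := mem_map.mp hvf
      exact mem_union_left _ (mem_map_of_mem f (by simpa using hv))
    · exact mem_union_right _ (mem_sdiff.mpr ⟨hv, hvf⟩)
  exact (card_le_card hcover).trans ((card_union_le _ _).trans_eq (by rw [card_map]))

end

variable [DecidableEq β]

noncomputable def monoEvent (e : Finset α) : Finset (β → Bool) :=
  {σ | ∃ b, ∀ v ∈ e, pairColoring f σ v = b}

theorem exists_pairColoring_eq_of_notMem_monoEvent {e : Finset α} {σ : β → Bool}
    (hσ : σ ∉ monoEvent f e) (b : Bool) : ∃ v ∈ e, pairColoring f σ v = b := by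
  by_contra! h
  exact hσ (mem_filter.mpr ⟨mem_univ σ, !b, fun v hv => Bool.eq_not_iff.mpr (h v hv)⟩)

variable [DecidableEq α]

def pairsMeeting (e : Finset α) : Finset β := {i | ∃ s, f (i, s) ∈ e}

theorem dependsOn_monoEvent (e : Finset α) :
    DependsOn (· ∈ monoEvent f e) (pairsMeeting f e : Set β) := by
  intro σ τ h
  have hcol : ∀ v ∈ e, pairColoring f σ v = pairColoring f τ v := by
    intro v hv
    by_cases hvf : v ∈ Set.range f
    · obtain ⟨⟨i, s⟩, rfl⟩ := hvf
      rw [pairColoring_apply, pairColoring_apply, h i (mem_filter.mpr ⟨mem_univ i, s, hv⟩)]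
    · rw [pairColoring_of_notMem_range f σ hvf, pairColoring_of_notMem_range f τ hvf]
  simp only [monoEvent, mem_filter, mem_univ, true_and, eq_iff_iff]
  exact exists_congr fun b => forall₂_congr fun v hv => by rw [hcol v hv]

theorem card_filter_pairColoring_eq_mul_le (e : Finset α) (b : Bool) :
    #{σ : β → Bool | ∀ v ∈ e, pairColoring f σ v = b} * 2 ^ #{p : β × Bool | f p ∈ e}
      ≤ 2 ^ Fintype.card β := by
  set S : Finset (β → Bool) := {σ | ∀ v ∈ e, pairColoring f σ v = b}
  rcases S.eq_empty_or_nonempty with hS | ⟨σ₀, hσ₀⟩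
  · simp [hS]
  have hpin : ∀ σ ∈ S, ∀ p : β × Bool, f p ∈ e → σ p.1 = xor b p.2 := by
    intro σ hσ p hp
    have := (mem_filter.mp hσ).2 _ hp
    rw [pairColoring_apply] at this
    simp [← this]
  have hpre : #{p : β × Bool | f p ∈ e} ≤ #(pairsMeeting f e) := by
    refine card_le_card_of_injOn Prod.fst (fun p hp => ?_) fun p hp q hq hpq => ?_
    · exact mem_coe.mpr (mem_filter.mpr ⟨mem_univ _, p.2, (mem_filter.mp hp).2⟩)
    · replace hp := (mem_filter.mp hp).2
      replace hq := (mem_filter.mp hq).2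
      have := (hpin σ₀ hσ₀ p hp).symm.trans (hpq ▸ hpin σ₀ hσ₀ q hq)
      exact Prod.ext hpq (by simpa using this)
  have hagree : ∀ σ ∈ S, ∀ τ ∈ S, ∀ i ∈ pairsMeeting f e, σ i = τ i := by
    intro σ hσ τ hτ i hi
    obtain ⟨s, hs⟩ := (mem_filter.mp hi).2
    exact (hpin σ hσ (i, s) hs).trans (hpin τ hτ (i, s) hs).symm
  calc #S * 2 ^ #{p : β × Bool | f p ∈ e} ≤ #S * 2 ^ #(pairsMeeting f e) := by
        gcongr; norm_num
    _ ≤ 2 ^ Fintype.card β := by simpa using card_mul_pow_card_le_of_eqOn hagree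

theorem card_monoEvent_mul_le {e : Finset α} (he : #(e \ univ.map f) ≤ 1) :
    #(monoEvent f e) * 2 ^ #e ≤ 2 ^ (Fintype.card β + 1) := by
  have hT := card_filter_pairColoring_eq_mul_le f e true
  have hF := card_filter_pairColoring_eq_mul_le f e false
  set T : Finset (β → Bool) := {σ | ∀ v ∈ e, pairColoring f σ v = true}
  set F : Finset (β → Bool) := {σ | ∀ v ∈ e, pairColoring f σ v = false}
  set k := #{p : β × Bool | f p ∈ e}
  have hmono : monoEvent f e = T ∪ F := by
    ext σ
    simp [monoEvent, T, F, Bool.exists_bool, or_comm]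
  have he' := card_le_card_filter_add_card_sdiff_map f e
  rcases (e \ univ.map f).eq_empty_or_nonempty with hU | ⟨u, hu⟩
  · rw [hU, card_empty, add_zero] at he'
    calc #(monoEvent f e) * 2 ^ #e ≤ (#T + #F) * 2 ^ k := by
          rw [hmono]; gcongr; exacts [card_union_le _ _, by norm_num]
      _ ≤ 2 ^ (Fintype.card β + 1) := by rw [pow_succ, add_mul]; omega
  · -- an unpaired vertex of `e` pins no coin but excludes the colour `false`
    have hF0 : F = ∅ := by
      refine eq_empty_of_forall_notMem fun σ hσ => ?_
      have := (mem_filter.mp hσ).2 u (mem_sdiff.mp hu).1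
      rw [pairColoring_of_notMem_range f σ fun ⟨p, hp⟩ =>
        (mem_sdiff.mp hu).2 (mem_map.mpr ⟨p, mem_univ p, hp⟩)] at this
      simp at this
    calc #(monoEvent f e) * 2 ^ #e ≤ #T * 2 ^ (k + 1) := by
          rw [hmono, hF0, union_empty]; gcongr; norm_num; omega
      _ ≤ 2 ^ (Fintype.card β + 1) := by rw [pow_succ, pow_succ]; nlinarith

theorem dependencyNeighbors_pairsMeeting_subset (E : Finset (Finset α)) (e : Finset α) :
    dependencyNeighbors E (pairsMeeting f) e
      ⊆ {e' ∈ E.erase e | ¬Disjoint e' (pairClosure f e)} := by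
  intro e' he'
  obtain ⟨he'E, hdis⟩ := mem_filter.mp he'
  obtain ⟨i, hi', hi⟩ := not_disjoint_iff.mp hdis
  obtain ⟨s, hs⟩ := (mem_filter.mp hi').2
  obtain ⟨t, ht⟩ := (mem_filter.mp hi).2
  exact mem_filter.mpr
    ⟨he'E, not_disjoint_iff.mpr ⟨f (i, s), hs, apply_mem_pairClosure f ht s⟩⟩

theorem card_dependencyNeighbors_add_card_le {H : FinHypergraph α} {Δ : ℕ}
    (hdeg : ∀ v, H.degree v ≤ Δ) {e : Finset α} (he : e ∈ H.E) :
    #(dependencyNeighbors H.E (pairsMeeting f) e) + #e ≤ 2 * #e * Δ :=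
  calc #(dependencyNeighbors H.E (pairsMeeting f) e) + #e
      ≤ #e + #{e' ∈ H.E.erase e | ¬Disjoint e' (pairClosure f e)} := by
        have := card_le_card (dependencyNeighbors_pairsMeeting_subset f H.E e)
        omega
    _ ≤ ∑ w ∈ pairClosure f e, H.degree w :=
        H.card_add_card_filter_not_disjoint_le_sum_degree he (subset_pairClosure f e)
    _ ≤ #(pairClosure f e) * Δ := by simpa using sum_le_card_nsmul _ _ _ fun w _ => hdeg w
    _ ≤ 2 * #e * Δ := by gcongr; exact card_pairClosure_le f e

end Pairing

theorem exp_mul_succ_mul_le_two_pow {n Δ d a m : ℕ} (hn : 1 ≤ n)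
    (hΔ : (Δ : ℝ) ≤ 2 ^ (n - 2) / (Real.exp 1 * n)) (hd : d + n ≤ 2 * n * Δ)
    (ha : a * 2 ^ n ≤ 2 ^ (m + 1)) : Real.exp 1 * (d + 1) * a ≤ 2 ^ m := by
  have he2 : 2 < Real.exp 1 := by linarith [Real.add_one_lt_exp one_ne_zero]
  have hd' : Real.exp 1 * (d + n) ≤ 2 * 2 ^ (n - 2) := by
    have hdR : (d : ℝ) + n ≤ 2 * n * Δ := by exact_mod_cast hd
    rw [le_div_iff₀ (by positivity)] at hΔ
    calc Real.exp 1 * (d + n) ≤ Real.exp 1 * (2 * n * Δ) := by gcongr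
      _ = 2 * (Δ * (Real.exp 1 * n)) := by ring
      _ ≤ 2 * 2 ^ (n - 2) := by gcongr
  obtain ⟨k, rfl⟩ : ∃ k, n = k + 2 := by
    refine ⟨n - 2, ?_⟩
    by_contra hn2
    obtain rfl : n = 1 := by omega
    norm_num at hd'
    nlinarith [d.cast_nonneg (α := ℝ)]
  rw [Nat.add_sub_cancel] at hd'
  have haR : (a : ℝ) * 2 ^ k * 2 ≤ 2 ^ m := by
    have : ((a * 2 ^ (k + 2) : ℕ) : ℝ) ≤ ((2 ^ (m + 1) : ℕ) : ℝ) := by exact_mod_cast ha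
    push_cast at this
    rw [pow_succ, pow_succ, pow_succ] at this
    linarith
  calc Real.exp 1 * (d + 1) * a ≤ Real.exp 1 * (d + ↑(k + 2)) * a := by
        gcongr; push_cast; linarith
    _ ≤ 2 * 2 ^ k * a := by gcongr
    _ ≤ 2 ^ m := by linarith

/-- Every `n`-uniform hypergraph with maximum degree at most `2^(n-2)/(e·n)` has a proper
halving 2-coloring: no hyperedge is monochromatic and the two color classes have sizes
differing by at most `1`. -/
theorem proper_halving_two_coloring (n : ℕ) (hn : 1 ≤ n) (H : FinHypergraph ℕ)
    (hU : H.IsUniform n)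
    (hdeg : ∀ v : ℕ, (H.degree v : ℝ) ≤ 2 ^ (n - 2) / (Real.exp 1 * n)) :
    ∃ c : ℕ → Bool,
      (∀ e ∈ H.E, (∃ v ∈ e, c v = true) ∧ (∃ v ∈ e, c v = false)) ∧
      ((H.V.filter fun v => c v = true).card : ℤ) -
          ((H.V.filter fun v => c v = false).card : ℤ) ≤ 1 ∧
      ((H.V.filter fun v => c v = false).card : ℤ) -
          ((H.V.filter fun v => c v = true).card : ℤ) ≤ 1 := by
  obtain ⟨m, f, hfV, hV⟩ := exists_pairing H.V
  rw [← Fintype.card_fin m] at hV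
  set Δ := ⌊(2 : ℝ) ^ (n - 2) / (Real.exp 1 * n)⌋₊
  have hdegΔ (v : ℕ) : H.degree v ≤ Δ := Nat.le_floor (hdeg v)
  let depDeg (e : Finset ℕ) := #(dependencyNeighbors H.E (pairsMeeting f) e)
  have hprob : ∀ e ∈ H.E,
      Real.exp 1 * (H.E.sup depDeg + 1) * #(monoEvent f e) ≤ Fintype.card (Fin m → Bool) := by
    intro e he
    obtain ⟨e₀, he₀, hsup⟩ := exists_mem_eq_sup H.E ⟨e, he⟩ depDeg
    have hsparse := card_dependencyNeighbors_add_card_le f hdegΔ he₀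
    have hmono := card_monoEvent_mul_le f (card_sdiff_map_le_one f hfV hV (hU.1 e he))
    rw [hU.2 e₀ he₀] at hsparse
    rw [hU.2 e he, Fintype.card_fin] at hmono
    rw [hsup, Fintype.card_fun, Fintype.card_bool, Fintype.card_fin]
    exact_mod_cast exp_mul_succ_mul_le_two_pow hn (Nat.floor_le (by positivity)) hsparse hmono
  obtain ⟨σ, hσ⟩ := lovasz_local_lemma_symmetric (fun e _ => dependsOn_monoEvent f e)
    (fun e he => le_sup (f := depDeg) he) hprob
  refine ⟨pairColoring f σ, fun e he => ⟨?_, ?_⟩,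
    abs_sub_le_iff.mp (abs_card_filter_pairColoring_sub_le f hfV hV σ)⟩ <;>
  exact exists_pairColoring_eq_of_notMem_monoEvent f (hσ e he) _
end

section
/- For every positive integer k, every balanced (k, s)-CNF formula with s = ⌊2^(k+1)/(e·k)⌋ is satisfiable, where e denotes Euler's number (e = exp 1); that is, every CNF formula in which every clause contains exactly k literals and every literal occurs in at most ⌊2^(k+1)/(e·k)⌋/2 clauses is satisfiable. In other words, f_bal(k) ≥ ⌊2^(k+1)/(e·k)⌋, where f_bal(k) is the largest s such that every balanced (k,s)-CNF formula is satisfiable. -/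
open Finset

/-!
Lopsided local lemma, by counting assignments (encoded as the set of true variables). Say `C`
conflicts with `D` if some literal of `C` occurs negated in `D`; an assignment falsifying `C`
then satisfies `D`. If every literal lies in at most `⌊s/2⌋` clauses, each clause conflicts
with at most `d = k⌊s/2⌋` others, and the choice of `s` gives `e d ≤ 2^k`.

For a set `S` of clauses and `C ∉ S` with `c` conflicts in `S`, at most a fraction
`2^{-k} / (1 - y)^c` of the models of `S` falsify `C`. Induct on `S`. The models of `S`
falsifying `C` are those of the part `R` of `S` not conflicting with `C`, and they form at most
a `2^{-k}` fraction of the models of `R`, since resampling the variables of `C` keeps a model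
of `R`. Adding back the conflicting clauses one at a time loses at most a factor `1 - y` each,
by induction. `C` is itself a conflict of each clause added back, so these have fewer than `d`
conflicts left; this is why `y = 1/d` and `(1 - 1/d)^{d-1} > 1/e` suffice, in place of the
usual `e (d + 1) ≤ 2^k`.
-/

namespace Cnf

open scoped Classical

def Satisfies (σ : ℕ → Bool) (C : Clause) : Prop := ∃ l ∈ C, σ l.1 = l.2

def Conflict (C D : Clause) : Prop := ∃ l ∈ C, (l.1, !l.2) ∈ D

noncomputable def conflicts (S : Finset Clause) (C : Clause) : Finset Clause :=
  S.filter (Conflict C)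

noncomputable def models (V : Finset ℕ) (S : Finset Clause) : Finset (Finset ℕ) :=
  V.powerset.filter fun A => ∀ C ∈ S, Satisfies (· ∈ A) C

noncomputable def falsifyingModels (V : Finset ℕ) (S : Finset Clause) (C : Clause) :
    Finset (Finset ℕ) :=
  (models V S).filter fun A => ¬ Satisfies (· ∈ A) C

variable {V : Finset ℕ} {S : Finset Clause} {C D : Clause} {σ : ℕ → Bool}

theorem Conflict.symm (h : Conflict C D) : Conflict D C := by
  obtain ⟨l, hl, hl'⟩ := h
  exact ⟨(l.1, !l.2), hl', by simpa using hl⟩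

theorem not_satisfies_iff : ¬ Satisfies σ C ↔ ∀ l ∈ C, σ l.1 = !l.2 := by
  simp only [Satisfies, not_exists, not_and, Bool.eq_not_iff, ne_eq]

theorem Conflict.satisfies (h : Conflict C D) (hC : ¬ Satisfies σ C) : Satisfies σ D := by
  obtain ⟨l, hl, hlD⟩ := h
  exact ⟨_, hlD, not_satisfies_iff.1 hC l hl⟩

theorem card_models_insert (V : Finset ℕ) (S : Finset Clause) (C : Clause) :
    #(models V (insert C S)) + #(falsifyingModels V S C) = #(models V S) := by
  have : models V (insert C S) = (models V S).filter fun A => Satisfies (· ∈ A) C := by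
    simp only [models, filter_filter, forall_mem_insert, and_comm]
  rw [this, falsifyingModels, card_filter_add_card_filter_not]

theorem falsifyingModels_filter_not_conflict (V : Finset ℕ) (S : Finset Clause) (C : Clause) :
    falsifyingModels V (S.filter fun D => ¬ Conflict C D) C = falsifyingModels V S C := by
  simp only [falsifyingModels, models, filter_filter, mem_filter]
  refine filter_congr fun A _ => and_congr_left fun hA => ⟨fun h D hD => ?_, fun h D hD => h D hD.1⟩
  by_cases hCD : Conflict C D
  · exact hCD.satisfies hA
  · exact h D ⟨hD, hCD⟩

theorem inter_eq_of_not_satisfies {A A' : Finset ℕ} (hA : ¬ Satisfies (· ∈ A) C)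
    (hA' : ¬ Satisfies (· ∈ A') C) : A ∩ C.image Prod.fst = A' ∩ C.image Prod.fst := by
  ext x
  simp only [mem_inter, mem_image, and_congr_left_iff]
  rintro ⟨l, hl, rfl⟩
  simpa using (not_satisfies_iff.1 hA l hl).trans (not_satisfies_iff.1 hA' l hl).symm

theorem sdiff_union_mem_models {A T : Finset ℕ} (hA : A ∈ falsifyingModels V S C)
    (hS : ∀ D ∈ S, ¬ Conflict C D) (hT : T ⊆ C.image Prod.fst) (hCV : C.image Prod.fst ⊆ V) :
    A \ C.image Prod.fst ∪ T ∈ models V S := by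
  simp only [falsifyingModels, models, mem_filter, mem_powerset] at hA ⊢
  obtain ⟨⟨hAV, hAS⟩, hAC⟩ := hA
  refine ⟨union_subset (sdiff_subset.trans hAV) (hT.trans hCV), fun D hD => ?_⟩
  obtain ⟨l, hlD, hl⟩ := hAS D hD
  simp only at hl
  have hlX : l.1 ∉ C.image Prod.fst := by
    rintro hmem
    obtain ⟨m, hm, hml⟩ := mem_image.1 hmem
    have hlm := not_satisfies_iff.1 hAC m hm
    rw [hml, hl] at hlm
    exact hS D hD ⟨m, hm, by rw [hml, ← hlm]; exact hlD⟩
  have hlT : l.1 ∉ T := fun h => hlX (hT h)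
  exact ⟨l, hlD, by simpa [hlX, hlT] using hl⟩

theorem two_pow_mul_card_falsifyingModels_le (hC : distinctVars C)
    (hCV : C.image Prod.fst ⊆ V) (hS : ∀ D ∈ S, ¬ Conflict C D) :
    2 ^ #C * #(falsifyingModels V S C) ≤ #(models V S) := by
  set X := C.image Prod.fst
  have hX : #X = #C := card_image_of_injOn fun l hl l' hl' h => hC l hl l' hl' h
  have resample_inter : ∀ B U : Finset ℕ, U ⊆ X → (B \ X ∪ U) ∩ X = U := by
    intro B U hU
    rw [union_inter_distrib_right, sdiff_inter_self, empty_union, inter_eq_left.2 hU]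
  have resample_sdiff : ∀ B U : Finset ℕ, U ⊆ X → (B \ X ∪ U) \ X = B \ X := by
    intro B U hU
    rw [union_sdiff_distrib, Finset.sdiff_idem, sdiff_eq_empty_iff_subset.2 hU, union_empty]
  calc 2 ^ #C * #(falsifyingModels V S C) = #(falsifyingModels V S C ×ˢ X.powerset) := by
        rw [card_product, card_powerset, hX, mul_comm]
    _ ≤ #(models V S) := card_le_card_of_injOn (fun p => p.1 \ X ∪ p.2) ?_ ?_
  · rintro ⟨A, T⟩ h
    simp only [coe_product, Set.mem_prod, mem_coe, mem_powerset] at h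
    exact sdiff_union_mem_models h.1 hS h.2 hCV
  · rintro ⟨A, T⟩ h ⟨A', T'⟩ h' heq
    simp only [coe_product, Set.mem_prod, mem_coe, mem_powerset] at h h' heq
    have hA := (mem_filter.1 h.1).2
    have hA' := (mem_filter.1 h'.1).2
    have hT : T = T' := by rw [← resample_inter A T h.2, heq, resample_inter A' T' h'.2]
    have hAX : A \ X = A' \ X := by rw [← resample_sdiff A T h.2, heq, resample_sdiff A' T' h'.2]
    rw [Prod.mk.injEq, ← sdiff_union_inter A X, ← sdiff_union_inter A' X, hAX,
      inter_eq_of_not_satisfies hA hA']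
    exact ⟨rfl, hT⟩

theorem one_sub_pow_mul_card_models_le {y : ℝ} (hy : y ≤ 1) (R T : Finset Clause)
    (h : ∀ D ∈ T, ∀ U ⊆ T.erase D,
      (#(falsifyingModels V (R ∪ U) D) : ℝ) ≤ y * #(models V (R ∪ U))) :
    (1 - y) ^ #T * #(models V R) ≤ (#(models V (R ∪ T)) : ℝ) := by
  induction T using Finset.induction_on with
  | empty => simp
  | @insert D T hDT ih =>
    have hT := ih fun D' hD' U hU =>
      h D' (mem_insert_of_mem hD') U (hU.trans (erase_subset_erase _ (subset_insert _ _)))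
    have hD := h D (mem_insert_self D T) T (by rw [erase_insert hDT])
    have hcount : (#(models V (R ∪ insert D T)) : ℝ) + #(falsifyingModels V (R ∪ T) D) =
        #(models V (R ∪ T)) := by
      rw [union_insert]; exact_mod_cast card_models_insert V (R ∪ T) D
    calc (1 - y) ^ #(insert D T) * #(models V R)
        = (1 - y) * ((1 - y) ^ #T * #(models V R)) := by
          rw [card_insert_of_notMem hDT, pow_succ]; ring
      _ ≤ (1 - y) * #(models V (R ∪ T)) := mul_le_mul_of_nonneg_left hT (by linarith)
      _ ≤ #(models V (R ∪ insert D T)) := by linarith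

variable {F : CnfFormula} {k d : ℕ} {y : ℝ}

theorem card_conflicts_lt (hd : ∀ C ∈ F, #(conflicts F C) ≤ d) (hSF : S ⊆ F) (hDF : D ∈ F)
    (hCF : C ∈ F) (hCS : C ∉ S) (hDC : Conflict D C) : #(conflicts S D) < d := by
  have hsub : conflicts S D ⊆ (conflicts F D).erase C := fun E hE =>
    mem_erase.2 ⟨fun h => hCS (h ▸ (mem_filter.1 hE).1), filter_subset_filter _ hSF hE⟩
  calc #(conflicts S D) ≤ #((conflicts F D).erase C) := card_le_card hsub
    _ < #(conflicts F D) := card_erase_lt_of_mem (mem_filter.2 ⟨hCF, hDC⟩)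
    _ ≤ d := hd D hDF

theorem one_sub_pow_mul_card_falsifyingModels_le (hF : isKCNF F k)
    (hV : ∀ C ∈ F, C.image Prod.fst ⊆ V) (hd : ∀ C ∈ F, #(conflicts F C) ≤ d)
    (hy : y < 1) (hp : ∀ c < d, ((2 : ℝ) ^ k)⁻¹ ≤ y * (1 - y) ^ c)
    (S : Finset Clause) (hSF : S ⊆ F) (C : Clause) (hCF : C ∈ F) (hCS : C ∉ S) :
    (1 - y) ^ #(conflicts S C) * #(falsifyingModels V S C) ≤
      ((2 : ℝ) ^ k)⁻¹ * #(models V S) := by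
  induction S using Finset.strongInduction generalizing C with
  | H S ih =>
  set R := S.filter fun D => ¬ Conflict C D
  have hRS : R ∪ conflicts S C = S := by
    rw [union_comm]; exact filter_union_filter_not_eq _ S
  have hfalsify : (#(falsifyingModels V S C) : ℝ) ≤ ((2 : ℝ) ^ k)⁻¹ * #(models V R) := by
    rw [← falsifyingModels_filter_not_conflict, le_inv_mul_iff₀ (by positivity), ← (hF C hCF).1]
    exact_mod_cast two_pow_mul_card_falsifyingModels_le (hF C hCF).2 (hV C hCF)
      fun D hD => (mem_filter.1 hD).2
  have hpeel : (1 - y) ^ #(conflicts S C) * #(models V R) ≤ #(models V S) := by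
    conv_rhs => rw [← hRS]
    refine one_sub_pow_mul_card_models_le hy.le R (conflicts S C) fun D hD U hU => ?_
    obtain ⟨hDS, hCD⟩ := mem_filter.1 hD
    have hDRU : D ∉ R ∪ U := by
      simp only [mem_union, mem_filter, not_or, not_and, not_not, R]
      exact ⟨fun _ => hCD, fun h => by simpa using hU h⟩
    have hRUS : R ∪ U ⊂ S := by
      refine ssubset_of_subset_of_ne (union_subset (filter_subset _ _) ?_) fun h => hDRU (h ▸ hDS)
      exact hU.trans ((erase_subset _ _).trans (filter_subset _ _))
    have hlt := card_conflicts_lt hd (hRUS.subset.trans hSF) (hSF hDS) hCF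
      (fun h => hCS (hRUS.subset h)) hCD.symm
    have hD := ih (R ∪ U) hRUS (hRUS.subset.trans hSF) D (hSF hDS) hDRU
    have hpos : 0 < (1 - y) ^ #(conflicts (R ∪ U) D) := pow_pos (by linarith) _
    refine le_of_mul_le_mul_left (hD.trans ?_) hpos
    calc ((2 : ℝ) ^ k)⁻¹ * #(models V (R ∪ U))
        ≤ y * (1 - y) ^ #(conflicts (R ∪ U) D) * #(models V (R ∪ U)) := by
          gcongr; exact hp _ hlt
      _ = _ := by ring
  calc (1 - y) ^ #(conflicts S C) * #(falsifyingModels V S C)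
      ≤ (1 - y) ^ #(conflicts S C) * (((2 : ℝ) ^ k)⁻¹ * #(models V R)) := by
        gcongr
    _ = ((2 : ℝ) ^ k)⁻¹ * ((1 - y) ^ #(conflicts S C) * #(models V R)) := by ring
    _ ≤ ((2 : ℝ) ^ k)⁻¹ * #(models V S) := by gcongr

theorem card_models_pos (hF : isKCNF F k) (hV : ∀ C ∈ F, C.image Prod.fst ⊆ V)
    (hd : ∀ C ∈ F, #(conflicts F C) ≤ d) (hy0 : 0 ≤ y) (hy : y < 1)
    (hp : ∀ c < d, ((2 : ℝ) ^ k)⁻¹ ≤ y * (1 - y) ^ c) (hp' : ((2 : ℝ) ^ k)⁻¹ < (1 - y) ^ d)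
    (S : Finset Clause) (hSF : S ⊆ F) : 0 < #(models V S) := by
  induction S using Finset.induction_on with
  | empty => exact card_pos.2 ⟨∅, by simp [models]⟩
  | @insert C S hCS ih =>
    have hCF : C ∈ F := hSF (mem_insert_self C S)
    have hSF : S ⊆ F := (subset_insert C S).trans hSF
    have hW : (0 : ℝ) < #(models V S) := by exact_mod_cast ih hSF
    have hc : #(conflicts S C) ≤ d := (card_le_card (filter_subset_filter _ hSF)).trans (hd C hCF)
    have hmono : (1 - y) ^ d ≤ (1 - y) ^ #(conflicts S C) :=
      pow_le_pow_of_le_one (by linarith) (by linarith) hc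
    have hlt : (#(falsifyingModels V S C) : ℝ) < #(models V S) := by
      refine lt_of_mul_lt_mul_left ?_ (pow_nonneg (by linarith : 0 ≤ 1 - y) #(conflicts S C))
      calc (1 - y) ^ #(conflicts S C) * #(falsifyingModels V S C)
          ≤ ((2 : ℝ) ^ k)⁻¹ * #(models V S) :=
            one_sub_pow_mul_card_falsifyingModels_le hF hV hd hy hp S hSF C hCF hCS
        _ < (1 - y) ^ d * #(models V S) := by gcongr
        _ ≤ (1 - y) ^ #(conflicts S C) * #(models V S) := by gcongr
    have := card_models_insert V S C
    have : #(falsifyingModels V S C) < #(models V S) := by exact_mod_cast hlt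
    omega

theorem cnfSatisfiable_of_lopsided (hF : isKCNF F k) (hd : ∀ C ∈ F, #(conflicts F C) ≤ d)
    (hy0 : 0 ≤ y) (hy : y < 1) (hp : ∀ c < d, ((2 : ℝ) ^ k)⁻¹ ≤ y * (1 - y) ^ c)
    (hp' : ((2 : ℝ) ^ k)⁻¹ < (1 - y) ^ d) : CnfSatisfiable F := by
  obtain ⟨A, hA⟩ := card_pos.1 <| card_models_pos (V := F.sup fun C => C.image Prod.fst) hF
    (fun _ hC => le_sup hC) hd hy0 hy hp hp' F subset_rfl
  exact ⟨(· ∈ A), (mem_filter.1 hA).2⟩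

theorem exp_neg_one_lt_one_sub_inv_pow {d : ℕ} (hd : 2 ≤ d) :
    Real.exp (-1) < (1 - (d : ℝ)⁻¹) ^ (d - 1) := by
  obtain ⟨n, rfl⟩ : ∃ n, d = n + 1 := ⟨d - 1, by omega⟩
  have hn : (0 : ℝ) < n := by exact_mod_cast (by omega : 0 < n)
  have hbase : Real.exp (-(n : ℝ)⁻¹) < 1 - ((n + 1 : ℕ) : ℝ)⁻¹ := by
    have h1 : 1 - ((n + 1 : ℕ) : ℝ)⁻¹ = ((n : ℝ)⁻¹ + 1)⁻¹ := by
      push_cast; field_simp; ring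
    rw [h1, Real.exp_neg]
    exact inv_strictAnti₀ (by positivity) (Real.add_one_lt_exp (by positivity))
  calc Real.exp (-1) = Real.exp (-(n : ℝ)⁻¹) ^ n := by
        rw [← Real.exp_nat_mul, mul_neg, mul_inv_cancel₀ hn.ne']
    _ < _ := pow_lt_pow_left₀ hbase (Real.exp_pos _).le (by omega)

theorem cnfSatisfiable_of_exp_mul_le (hk : 1 ≤ k) (hF : isKCNF F k)
    (hd : ∀ C ∈ F, #(conflicts F C) ≤ d) (he : Real.exp 1 * d ≤ 2 ^ k) : CnfSatisfiable F := by
  rcases Nat.lt_or_ge d 2 with hd2 | hd2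
  · have hdk : d < k := by
      by_contra! hkd
      obtain ⟨rfl, rfl⟩ : k = 1 ∧ d = 1 := by omega
      norm_num at he
      linarith [Real.exp_one_gt_d9]
    refine cnfSatisfiable_of_lopsided hF hd (y := 2⁻¹) (by norm_num) (by norm_num)
      (fun c hc => ?_) ?_
    · rw [← inv_pow, show (1 : ℝ) - 2⁻¹ = 2⁻¹ by norm_num, ← pow_succ']
      exact pow_le_pow_of_le_one (by norm_num) (by norm_num) (by omega)
    · rw [← inv_pow, show (1 : ℝ) - 2⁻¹ = 2⁻¹ by norm_num]
      exact pow_lt_pow_right_of_lt_one₀ (by norm_num) (by norm_num) hdk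
  · have hdR : (2 : ℝ) ≤ d := by exact_mod_cast hd2
    have hp : ((2 : ℝ) ^ k)⁻¹ ≤ (d : ℝ)⁻¹ * Real.exp (-1) := by
      rw [Real.exp_neg, ← mul_inv]
      exact inv_anti₀ (by positivity) (by linarith)
    have hexp := exp_neg_one_lt_one_sub_inv_pow hd2
    refine cnfSatisfiable_of_lopsided hF hd (y := (d : ℝ)⁻¹) (by positivity)
      (inv_lt_one_of_one_lt₀ (by linarith)) (fun c hc => ?_) ?_
    · calc ((2 : ℝ) ^ k)⁻¹ ≤ (d : ℝ)⁻¹ * Real.exp (-1) := hp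
        _ ≤ (d : ℝ)⁻¹ * (1 - (d : ℝ)⁻¹) ^ (d - 1) := by gcongr
        _ ≤ (d : ℝ)⁻¹ * (1 - (d : ℝ)⁻¹) ^ c := by
          have : (d : ℝ)⁻¹ ≤ 1 := inv_le_one_of_one_le₀ (by linarith)
          have : 0 ≤ (d : ℝ)⁻¹ := by positivity
          exact mul_le_mul_of_nonneg_left
            (pow_le_pow_of_le_one (by linarith) (by linarith) (by omega)) (by positivity)
    · have hinv : (d : ℝ)⁻¹ ≤ 1 - (d : ℝ)⁻¹ := by
        rw [le_sub_iff_add_le, ← two_mul, mul_inv_le_iff₀ (by linarith)]; linarith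
      calc ((2 : ℝ) ^ k)⁻¹ ≤ (d : ℝ)⁻¹ * Real.exp (-1) := hp
        _ ≤ (1 - (d : ℝ)⁻¹) * Real.exp (-1) := by gcongr
        _ < (1 - (d : ℝ)⁻¹) * (1 - (d : ℝ)⁻¹) ^ (d - 1) := by gcongr; linarith
        _ = (1 - (d : ℝ)⁻¹) ^ d := by rw [← pow_succ', Nat.sub_add_cancel (by omega)]

theorem card_conflicts_le_card_mul {m : ℕ} (hm : ∀ l, litOcc F l ≤ m) (C : Clause) :
    #(conflicts F C) ≤ #C * m := by
  calc #(conflicts F C) ≤ #(C.biUnion fun l => F.filter fun D => (l.1, !l.2) ∈ D) :=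
        card_le_card fun D hD => by
          obtain ⟨hDF, l, hl, hlD⟩ := mem_filter.1 hD
          exact mem_biUnion.2 ⟨l, hl, mem_filter.2 ⟨hDF, hlD⟩⟩
    _ ≤ ∑ l ∈ C, litOcc F (l.1, !l.2) := card_biUnion_le
    _ ≤ #C * m := by simpa using sum_le_card_nsmul C _ m fun l _ => hm (l.1, !l.2)

end Cnf

theorem balanced_lll_lower_bound_general (k : ℕ) (hk : 1 ≤ k) (F : CnfFormula)
    (hF : isKCNF F k) (s : ℕ) (hs : s = ⌊(2 : ℝ) ^ (k + 1) / (Real.exp 1 * k)⌋₊)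
    (hlit : ∀ l : Lit, (litOcc F l : ℝ) ≤ (s : ℝ) / 2) :
    CnfSatisfiable F := by
  have hocc : ∀ l, litOcc F l ≤ s / 2 := fun l =>
    (Nat.le_div_iff_mul_le two_pos).2 (by exact_mod_cast (le_div_iff₀ two_pos).1 (hlit l))
  refine Cnf.cnfSatisfiable_of_exp_mul_le hk hF (d := k * (s / 2)) (fun C hC => ?_) ?_
  · simpa [(hF C hC).1] using Cnf.card_conflicts_le_card_mul hocc C
  · have hs' : (s : ℝ) * (Real.exp 1 * k) ≤ 2 ^ (k + 1) := by
      rw [← le_div_iff₀ (by positivity), hs]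
      exact Nat.floor_le (by positivity)
    have hs2 : ((s / 2 : ℕ) : ℝ) ≤ s / 2 := Nat.cast_div_le
    calc Real.exp 1 * ((k * (s / 2) : ℕ) : ℝ) ≤ Real.exp 1 * (k * ((s : ℝ) / 2)) := by
          push_cast; gcongr
      _ = s * (Real.exp 1 * k) / 2 := by ring
      _ ≤ 2 ^ (k + 1) / 2 := by gcongr
      _ = 2 ^ k := by ring

/-- Every balanced `(k, s)`-CNF formula with `s = ⌊2^(k+1)/(e·k)⌋` is satisfiable:
every CNF formula in which each clause has exactly `k` literals, each variable occurs in
at most `s` clauses and each literal occurs in at most `s/2` clauses is satisfiable.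
In other words, `f_bal(k) ≥ ⌊2^(k+1)/(e·k)⌋`. -/
theorem balanced_lll_lower_bound (k : ℕ) (hk : 1 ≤ k) (F : CnfFormula)
    (hF : isKCNF F k) (s : ℕ) (hs : s = ⌊(2 : ℝ) ^ (k + 1) / (Real.exp 1 * k)⌋₊)
    (hvar : ∀ x : ℕ, varOcc F x ≤ s)
    (hlit : ∀ l : Lit, (litOcc F l : ℝ) ≤ (s : ℝ) / 2) :
    CnfSatisfiable F :=
  balanced_lll_lower_bound_general k hk F hF s hs hlit
end

section
/- If there exists a (k,s)-hypergraph, i.e. a k-uniform hypergraph with maximum degree at most s on which Maker has a winning pairing strategy, then there exists an unsatisfiable balanced (k, 2s)-CNF formula, i.e. an unsatisfiable CNF formula in which every clause contains exactly k literals and every literal occurs in at most s clauses. -/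
open Finset

/-! Orient each pair `{a, b}` of Maker's strategy and give it a variable `x`, so that `a` and `b`
become the literals `x` and `¬x`; the first vertex `v₀` gets the variable `0`. Every hyperedge
inside `v₀ ∪ ⋃ P` meeting each pair at most once gives the clause of its vertices' literals,
and the formula takes two copies of these clauses on disjoint pair variables, reading `v₀` as
`¬0` in one copy and as `0` in the other. Given an assignment, go to the copy in which the
literal of `v₀` is false: the vertices whose literals are false there pick one vertex from each
pair, so Maker's strategy yields a hyperedge inside them plus `v₀`, and its clause is
falsified. Each literal is the literal of a single vertex in a single copy, so it occurs in at
most `s` clauses. -/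

section CopiesCnf

variable {α ι : Type*} [Fintype ι]

theorem varOcc_le_litOcc_add_litOcc (F : CnfFormula) (x : ℕ) :
    varOcc F x ≤ litOcc F (x, false) + litOcc F (x, true) := by
  refine (card_le_card fun C hC => ?_).trans (card_union_le _ _)
  obtain ⟨hCF, b, hb⟩ := mem_filter.1 hC
  cases b <;> simp [hCF, hb]

theorem varOcc_le_two_mul {F : CnfFormula} {s : ℕ} (h : ∀ l, litOcc F l ≤ s) (x : ℕ) :
    varOcc F x ≤ 2 * s :=
  (varOcc_le_litOcc_add_litOcc F x).trans ((add_le_add (h _) (h _)).trans_eq (two_mul s).symm)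

theorem distinctVars_image {f : α → Lit} {e : Finset α}
    (hf : Set.InjOn (fun v => (f v).1) e) : distinctVars (e.image f) := by
  simp only [distinctVars, mem_image]
  rintro _ ⟨v, hv, rfl⟩ _ ⟨w, hw, rfl⟩ hvw
  rw [hf hv hw hvw]

/-- The formula with one clause `e.image (ℓ i)` for every edge `e ∈ E` and every copy `i`. -/
def copiesCnf (E : Finset (Finset α)) (ℓ : ι → α → Lit) : CnfFormula :=
  (univ ×ˢ E).image fun ie => ie.2.image (ℓ ie.1)

theorem mem_copiesCnf {E : Finset (Finset α)} {ℓ : ι → α → Lit} {C : Clause} :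
    C ∈ copiesCnf E ℓ ↔ ∃ i, ∃ e ∈ E, e.image (ℓ i) = C := by
  simp [copiesCnf]

theorem isKCNF_copiesCnf {E : Finset (Finset α)} {ℓ : ι → α → Lit} {k : ℕ}
    (hcard : ∀ e ∈ E, e.card = k)
    (hvar : ∀ i, ∀ e ∈ E, Set.InjOn (fun v => (ℓ i v).1) e) :
    isKCNF (copiesCnf E ℓ) k := by
  rintro C hC
  obtain ⟨i, e, he, rfl⟩ := mem_copiesCnf.1 hC
  refine ⟨?_, distinctVars_image (hvar i e he)⟩
  rw [card_image_of_injOn (hvar i e he).of_comp, hcard e he]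

theorem litOcc_copiesCnf_le [DecidableEq α] {E : Finset (Finset α)} {ℓ : ι → α → Lit}
    {U : Set α} {s : ℕ}
    (hE : ∀ e ∈ E, ↑e ⊆ U) (hℓ : Set.InjOn (Function.uncurry ℓ) (Set.univ ×ˢ U))
    (hdeg : ∀ u, (E.filter (u ∈ ·)).card ≤ s) (l : Lit) :
    litOcc (copiesCnf E ℓ) l ≤ s := by
  by_cases hl : ∃ i, ∃ u ∈ U, ℓ i u = l
  · obtain ⟨i, u, hu, rfl⟩ := hl
    refine (card_le_card (t := (E.filter (u ∈ ·)).image (·.image (ℓ i))) fun C hC => ?_).trans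
      (card_image_le.trans (hdeg u))
    obtain ⟨hCF, hlC⟩ := mem_filter.1 hC
    obtain ⟨j, e, he, rfl⟩ := mem_copiesCnf.1 hCF
    obtain ⟨v, hv, hvu⟩ := mem_image.1 hlC
    obtain ⟨rfl, rfl⟩ : j = i ∧ v = u := Prod.ext_iff.1 <|
      hℓ (Set.mk_mem_prod trivial (hE e he hv)) (Set.mk_mem_prod trivial hu) hvu
    exact mem_image.2 ⟨e, mem_filter.2 ⟨he, hv⟩, rfl⟩
  · suffices (copiesCnf E ℓ).filter (l ∈ ·) = ∅ by simp [litOcc, this]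
    refine filter_eq_empty_iff.2 fun C hC hlC => ?_
    obtain ⟨i, e, he, rfl⟩ := mem_copiesCnf.1 hC
    obtain ⟨v, hv, rfl⟩ := mem_image.1 hlC
    exact hl ⟨i, v, hE e he hv, rfl⟩

end CopiesCnf

theorem card_filter_falsified_eq_one {α : Type*} {f : α → Lit} {p : Finset α} {x : ℕ}
    (hf : Set.InjOn f p) (hp : p.image f = {(x, false), (x, true)}) (σ : ℕ → Bool) :
    (p.filter fun v => σ (f v).1 ≠ (f v).2).card = 1 := by
  rw [← card_image_of_injOn (hf.mono (filter_subset _ _)),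
    ← filter_image (p := fun l : Lit => σ l.1 ≠ l.2), hp]
  cases hσx : σ x <;> simp [filter_insert, filter_singleton, hσx]

section Pairing

variable {α : Type*} [DecidableEq α]

theorem exists_labelling_of_pairs {P : Finset (Finset α)} (hcard : ∀ p ∈ P, p.card = 2)
    (hdisj : (P : Set (Finset α)).PairwiseDisjoint id) :
    ∃ lab : α → Lit, Set.InjOn lab ↑(P.sup id) ∧
      ∀ p ∈ P, ∃ x, p.image lab = {(x, false), (x, true)} := by
  obtain ⟨idx, hidx⟩ := Set.countable_iff_exists_injOn.1 P.countable_toSet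
  choose! pr hprP hpr using fun v (hv : v ∈ P.sup id) => mem_sup.1 hv
  have pr_eq : ∀ p ∈ P, ∀ v ∈ p, pr v = p := fun p hp v hv =>
    have hvW : v ∈ P.sup id := mem_sup.2 ⟨p, hp, hv⟩
    hdisj.elim_finset (hprP v hvW) hp v (hpr v hvW) hv
  choose! t htp ht using fun p (hp : p ∈ P) => exists_subset_card_eq (hcard p hp ▸ one_le_two)
  refine ⟨fun v => (idx (pr v), decide (v ∈ t (pr v))), ?_, fun p hp => ⟨idx p, ?_⟩⟩
  · intro v hv w hw h
    obtain ⟨hidx_eq, hsign⟩ := Prod.ext_iff.1 h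
    have hpr_eq : pr v = pr w := hidx (hprP v hv) (hprP w hw) hidx_eq
    obtain ⟨y, z, hyz, hp⟩ := card_eq_two.1 (hcard _ (hprP w hw))
    obtain ⟨a, ha⟩ := card_eq_one.1 (ht _ (hprP w hw))
    have hv' := hpr v hv
    have hw' := hpr w hw
    have ha' := htp _ (hprP w hw)
    simp only [hpr_eq, id] at hv' hw' hsign
    rw [ha] at ha' hsign
    simp only [hp, mem_insert, mem_singleton, singleton_subset_iff, decide_eq_decide]
      at hv' hw' ha' hsign
    grind
  · obtain ⟨y, z, hyz, rfl⟩ := card_eq_two.1 (hcard p hp)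
    obtain ⟨a, ha⟩ := card_eq_one.1 (ht _ hp)
    have ha' := htp _ hp
    rw [ha, singleton_subset_iff, mem_insert, mem_singleton] at ha'
    rw [image_insert, image_singleton, pr_eq _ hp y (by simp), pr_eq _ hp z (by simp), ha]
    rcases ha' with rfl | rfl
    · simp [hyz.symm]
      rw [pair_comm]
    · simp [hyz]

def transversalEdges (E : Finset (Finset α)) (v₀ : α) (P : Finset (Finset α)) :
    Finset (Finset α) :=
  E.filter fun e => e ⊆ insert v₀ (P.sup id) ∧ ∀ p ∈ P, (e ∩ p).card ≤ 1

/-- `ℓ c v` is the literal of the vertex `v` in copy `c`. -/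
structure IsPairingLabelling (v₀ : α) (P : Finset (Finset α)) (ℓ : Bool → α → Lit) :
    Prop where
  apex : ∀ c, ℓ c v₀ = (0, !c)
  injOn : Set.InjOn (Function.uncurry ℓ) (Set.univ ×ˢ ↑(insert v₀ (P.sup id)))
  image_pair : ∀ c, ∀ p ∈ P, ∃ x, p.image (ℓ c) = {(x, false), (x, true)}

namespace IsPairingLabelling

variable {v₀ : α} {P : Finset (Finset α)} {ℓ : Bool → α → Lit}

theorem injOn_copy (hℓ : IsPairingLabelling v₀ P ℓ) (c : Bool) :
    Set.InjOn (ℓ c) ↑(insert v₀ (P.sup id)) := fun _ hv _ hw h =>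
  (Prod.ext_iff.1 (hℓ.injOn (Set.mk_mem_prod trivial hv) (Set.mk_mem_prod trivial hw) h)).2

theorem eq_apex_of_fst_eq_zero (hℓ : IsPairingLabelling v₀ P ℓ) {c : Bool} {w : α}
    (hw : w ∈ insert v₀ (P.sup id)) (h : (ℓ c w).1 = 0) : w = v₀ := by
  have hlit : ℓ c w = ℓ (!(ℓ c w).2) v₀ := by
    rw [hℓ.apex, Bool.not_not, ← h]
  exact (Prod.ext_iff.1 (hℓ.injOn (Set.mk_mem_prod trivial hw)
    (Set.mk_mem_prod trivial (mem_insert_self _ _)) hlit)).2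

theorem mem_of_fst_eq (hℓ : IsPairingLabelling v₀ P ℓ) {c : Bool} {p : Finset α} {v w : α}
    (hp : p ∈ P) (hv : v ∈ p) (hw : w ∈ insert v₀ (P.sup id))
    (h : (ℓ c w).1 = (ℓ c v).1) :
    w ∈ p := by
  have hpU : p ⊆ insert v₀ (P.sup id) := (le_sup (f := id) hp).trans (subset_insert _ _)
  obtain ⟨x, hx⟩ := hℓ.image_pair c p hp
  have hvx : (ℓ c v).1 = x := by
    have hmem := mem_image_of_mem (ℓ c) hv
    rw [hx] at hmem
    simp only [mem_insert, mem_singleton] at hmem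
    rcases hmem with hmem | hmem <;> rw [hmem]
  have hwmem : ℓ c w ∈ p.image (ℓ c) := by
    rw [hx, ← Prod.mk.eta (p := ℓ c w), h, hvx]
    cases (ℓ c w).2 <;> simp
  obtain ⟨u, hu, huw⟩ := mem_image.1 hwmem
  exact hℓ.injOn_copy c (hpU hu) hw huw ▸ hu

theorem injOn_fst (hℓ : IsPairingLabelling v₀ P ℓ) (c : Bool) {E : Finset (Finset α)}
    {e : Finset α} (he : e ∈ transversalEdges E v₀ P) :
    Set.InjOn (fun v => (ℓ c v).1) e := by
  obtain ⟨-, hsub, hone⟩ := mem_filter.1 he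
  intro v hv w hw h
  rcases mem_insert.1 (hsub hv) with rfl | hvW
  · exact (hℓ.eq_apex_of_fst_eq_zero (hsub hw) (h.symm.trans (by simp [hℓ.apex]))).symm
  · obtain ⟨p, hp, hvp⟩ := mem_sup.1 hvW
    exact card_le_one.1 (hone p hp) v (mem_inter.2 ⟨hv, hvp⟩) w
      (mem_inter.2 ⟨hw, hℓ.mem_of_fst_eq hp hvp (hsub hw) h.symm⟩)

theorem not_cnfSatisfiable (hℓ : IsPairingLabelling v₀ P ℓ) {E : Finset (Finset α)}
    (hv₀ : v₀ ∉ P.sup id)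
    (hwin : ∀ S : Finset α, S ⊆ P.sup id → (∀ p ∈ P, (S ∩ p).card = 1) →
      ∃ e ∈ E, e ⊆ insert v₀ S) :
    ¬ CnfSatisfiable (copiesCnf (transversalEdges E v₀ P) ℓ) := by
  rintro ⟨σ, hσ⟩
  set c := σ 0
  set S := (P.sup id).filter fun v => σ (ℓ c v).1 ≠ (ℓ c v).2
  have hS : ∀ p ∈ P, (S ∩ p).card = 1 := by
    intro p hp
    have hpW : p ⊆ P.sup id := le_sup (f := id) hp
    obtain ⟨x, hx⟩ := hℓ.image_pair c p hp
    rw [filter_inter, inter_eq_right.2 hpW]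
    exact card_filter_falsified_eq_one
      ((hℓ.injOn_copy c).mono (hpW.trans (subset_insert _ _))) hx σ
  obtain ⟨e, he, heS⟩ := hwin S (filter_subset _ _) hS
  have he' : e ∈ transversalEdges E v₀ P := by
    refine mem_filter.2
      ⟨he, heS.trans (insert_subset_insert _ (filter_subset _ _)), fun p hp => ?_⟩
    refine (card_le_card fun v hv => ?_).trans (hS p hp).le
    obtain ⟨hve, hvp⟩ := mem_inter.1 hv
    rcases mem_insert.1 (heS hve) with rfl | hvS
    · exact absurd (mem_sup.2 ⟨p, hp, hvp⟩) hv₀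
    · exact mem_inter.2 ⟨hvS, hvp⟩
  obtain ⟨l, hl, hσl⟩ := hσ _ (mem_copiesCnf.2 ⟨c, e, he', rfl⟩)
  obtain ⟨v, hv, rfl⟩ := mem_image.1 hl
  rcases mem_insert.1 (heS hv) with rfl | hvS
  · simp [hℓ.apex, c] at hσl
  · exact (mem_filter.1 hvS).2 hσl

end IsPairingLabelling

/-- The shift `x ↦ 2 x + 1 + c` keeps the two copies apart and the variable `0` free for
`v₀`. -/
def apexLabelling (v₀ : α) (lab : α → Lit) (c : Bool) (v : α) : Lit :=
  if v = v₀ then (0, !c) else (2 * (lab v).1 + 1 + c.toNat, (lab v).2)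

theorem isPairingLabelling_apexLabelling {v₀ : α} {P : Finset (Finset α)} {lab : α → Lit}
    (hv₀ : v₀ ∉ P.sup id) (hinj : Set.InjOn lab ↑(P.sup id))
    (himage : ∀ p ∈ P, ∃ x, p.image lab = {(x, false), (x, true)}) :
    IsPairingLabelling v₀ P (apexLabelling v₀ lab) := by
  refine ⟨fun c => by simp [apexLabelling], ?_, fun c p hp => ?_⟩
  · rintro ⟨c, v⟩ ⟨-, hv⟩ ⟨c', w⟩ ⟨-, hw⟩ h
    simp only [Function.uncurry, apexLabelling] at h
    by_cases hvv₀ : v = v₀ <;> by_cases hwv₀ : w = v₀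
    · simp_all
    · simp only [hvv₀, hwv₀, if_true, if_false, Prod.mk.injEq] at h; omega
    · simp only [hvv₀, hwv₀, if_true, if_false, Prod.mk.injEq] at h; omega
    · simp only [hvv₀, hwv₀, if_false, Prod.mk.injEq] at h
      obtain rfl : c = c' := by cases c <;> cases c' <;> simp at h ⊢ <;> omega
      have hlab : lab v = lab w := Prod.ext (by omega) h.2
      simpa using hinj ((mem_insert.1 hv).resolve_left hvv₀)
        ((mem_insert.1 hw).resolve_left hwv₀) hlab
  · obtain ⟨x, hx⟩ := himage p hp
    refine ⟨2 * x + 1 + c.toNat, ?_⟩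
    have hv₀p : v₀ ∉ p := fun h => hv₀ (mem_sup.2 ⟨p, hp, h⟩)
    have hshift : p.image (apexLabelling v₀ lab c) =
        (p.image lab).image fun l => (2 * l.1 + 1 + c.toNat, l.2) := by
      rw [image_image]
      exact image_congr fun v hv => if_neg (ne_of_mem_of_not_mem hv hv₀p)
    rw [hshift, hx]
    simp

end Pairing

/-- If there is a `(k,s)`-hypergraph (a `k`-uniform hypergraph with maximum degree at
most `s` on which Maker has a winning pairing strategy), then there is an unsatisfiable
balanced `(k,2s)`-CNF formula: every clause has exactly `k` literals, every variable
occurs in at most `2s` clauses and every literal occurs in at most `s` clauses. -/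
theorem hypergraph_to_unsat_balanced_CNF {α : Type*} [DecidableEq α] (k s : ℕ)
    (H : FinHypergraph α) (hU : H.IsUniform k) (hdeg : ∀ v : α, H.degree v ≤ s)
    (hwin : H.MakerPairingWin) :
    ∃ F : CnfFormula, isKCNF F k ∧
      (∀ x : ℕ, varOcc F x ≤ 2 * s) ∧
      (∀ l : Lit, litOcc F l ≤ s) ∧
      ¬ CnfSatisfiable F := by
  obtain ⟨v₀, -, P, hP, hdisj, -, hwin⟩ := hwin
  have hv₀ : v₀ ∉ P.sup id := fun h =>
    have ⟨p, hp, hv₀p⟩ := mem_sup.1 h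
    (mem_erase.1 ((hP p hp).2 hv₀p)).1 rfl
  obtain ⟨lab, hinj, himage⟩ := exists_labelling_of_pairs (fun p hp => (hP p hp).1) hdisj
  have hℓ := isPairingLabelling_apexLabelling hv₀ hinj himage
  have hE : transversalEdges H.E v₀ P ⊆ H.E := filter_subset _ _
  let F := copiesCnf (transversalEdges H.E v₀ P) (apexLabelling v₀ lab)
  have hlit : ∀ l, litOcc F l ≤ s :=
    litOcc_copiesCnf_le (fun e he => coe_subset.2 (mem_filter.1 he).2.1) hℓ.injOn
      fun u => (card_le_card (filter_subset_filter _ hE)).trans (hdeg u)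
  exact ⟨F, isKCNF_copiesCnf (fun e he => hU.2 e (hE he)) (fun c _ he => hℓ.injOn_fst c he),
    varOcc_le_two_mul hlit, hlit, hℓ.not_cnfSatisfiable hv₀ hwin⟩
end

section
/- For every integer k ≥ 3 there exists an unsatisfiable CNF formula in which every clause contains exactly k literals and whose maximum neighborhood size is at most 2^(k-1) + 2^(k-2) + 1. Consequently l(k) ≤ 2^(k-1) + 2^(k-2) for every k ≥ 3, where l(k) is the largest integer m such that every k-CNF formula with maximum neighborhood size at most m is satisfiable. -/
open Finset

/-!
For each `a ∈ {0,1}^n₁` take fresh variables `v_a`, `y_a`, `p_{a,1..n₁}`, `q_{a,1..n₂}`, and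
shared variables `z_{1..n₁}`. The `2^n₁` clauses `v_a ∨ ±p_{a,1} ∨ ⋯ ∨ ±p_{a,n₁}` (all sign
patterns) together force `v_a`; likewise the `2^n₂` clauses `¬v_a ∨ ¬y_a ∨ ±q_{a,1} ∨ ⋯` force
`¬y_a`. The clauses `y_a ∨ (z ≠ a)` then say that `z` differs from every `a`, which is
impossible. A clause of block `a` meets only clauses of block `a`, except that the `2^n₁`
clauses `y_a ∨ (z ≠ a)` also meet each other through `z`; this bounds every neighborhood by
`2^n₁ + 2^n₂ + 1`, and `n₁ = k - 1`, `n₂ = k - 2` gives a `k`-CNF formula.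
-/

open Function

section CnfBasics

variable {C : Clause} {l : Lit}

lemma clauseNbhd_le_card_of_subset {F : CnfFormula} (S : Finset Clause)
    (h : ∀ D ∈ F, D ≠ C → (∃ l ∈ C, ∃ b : Bool, (l.1, b) ∈ D) → D ∈ S) :
    clauseNbhd F C ≤ S.card :=
  card_le_card fun D hD => by
    rw [mem_filter] at hD
    exact h D hD.1 hD.2.1 hD.2.2

lemma distinctVars_insert (hC : distinctVars C) (hl : ∀ l' ∈ C, l'.1 ≠ l.1) :
    distinctVars (insert l C) := by
  intro l₁ h₁ l₂ h₂ h
  rcases mem_insert.1 h₁ with h₁ | h₁ <;> rcases mem_insert.1 h₂ with h₂ | h₂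
  · exact h₁.trans h₂.symm
  · exact absurd (h₁ ▸ h).symm (hl l₂ h₂)
  · exact absurd (h₂ ▸ h) (hl l₁ h₁)
  · exact hC l₁ h₁ l₂ h₂ h

lemma card_insert_of_forall_fst_ne (hl : ∀ l' ∈ C, l'.1 ≠ l.1) :
    (insert l C).card = C.card + 1 :=
  card_insert_of_notMem fun h => hl l h rfl

lemma eq_of_satisfies_insert {σ : ℕ → Bool} (h : ∃ l' ∈ insert l C, σ l'.1 = l'.2)
    (hC : ∀ l' ∈ C, σ l'.1 ≠ l'.2) : σ l.1 = l.2 := by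
  obtain ⟨l', hl', hσ⟩ := h
  rcases mem_insert.1 hl' with rfl | hl'
  · exact hσ
  · exact absurd hσ (hC l' hl')

end CnfBasics

section SignClause

variable {n : ℕ} {x : Fin n → ℕ}

def signClause (x : Fin n → ℕ) (s : Fin n → Bool) : Clause :=
  univ.image fun j => (x j, s j)

@[simp] lemma mem_signClause {s : Fin n → Bool} {l : Lit} :
    l ∈ signClause x s ↔ ∃ j, (x j, s j) = l := by
  simp [signClause]

lemma card_signClause (hx : Injective x) (s : Fin n → Bool) : (signClause x s).card = n := by
  rw [signClause, card_image_of_injective _ fun i j h => hx (congrArg Prod.fst h), card_univ,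
    Fintype.card_fin]

lemma distinctVars_signClause (hx : Injective x) (s : Fin n → Bool) :
    distinctVars (signClause x s) := by
  intro l₁ h₁ l₂ h₂ h
  obtain ⟨i, rfl⟩ := mem_signClause.1 h₁
  obtain ⟨j, rfl⟩ := mem_signClause.1 h₂
  obtain rfl := hx h
  rfl

lemma not_satisfies_signClause (σ : ℕ → Bool) :
    ∀ l ∈ signClause x (fun j => !σ (x j)), σ l.1 ≠ l.2 := by
  simp

end SignClause

lemma card_image_union_image_le {β : Type*} [DecidableEq β] {m n : ℕ}
    (f : (Fin m → Bool) → β) (g : (Fin n → Bool) → β) :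
    (univ.image f ∪ univ.image g).card ≤ 2 ^ m + 2 ^ n :=
  (card_union_le _ _).trans
    (add_le_add (card_image_le.trans_eq (by simp)) (card_image_le.trans_eq (by simp)))

namespace ThreeHalves

inductive Var (n : ℕ)
  | z (j : Fin n)
  | v (a : Fin n → Bool)
  | y (a : Fin n → Bool)
  | p (a : Fin n → Bool) (j : Fin n)
  | q (a : Fin n → Bool) (j : ℕ) -- indexed by `ℕ` so that `Var` does not depend on `n₂`
  deriving Countable

variable {n₁ n₂ : ℕ}

noncomputable def Var.index : Var n₁ → ℕ :=
  (Countable.exists_injective_nat (Var n₁)).choose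

lemma Var.index_injective : Injective (Var.index : Var n₁ → ℕ) :=
  (Countable.exists_injective_nat (Var n₁)).choose_spec

@[simp] lemma Var.index_inj {u w : Var n₁} : u.index = w.index ↔ u = w :=
  Var.index_injective.eq_iff

noncomputable def vClause (a ε : Fin n₁ → Bool) : Clause :=
  insert ((Var.v a).index, true) (signClause (fun j => (Var.p a j).index) ε)

noncomputable def vyClause (a : Fin n₁ → Bool) (δ : Fin n₂ → Bool) : Clause :=
  insert ((Var.y a).index, false)
    (insert ((Var.v a).index, false) (signClause (fun j => (Var.q a j).index) δ))

noncomputable def yzClause (a : Fin n₁ → Bool) : Clause :=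
  insert ((Var.y a).index, true) (signClause (fun j => (Var.z j).index) fun j => !a j)

noncomputable def formula (n₁ n₂ : ℕ) : CnfFormula :=
  image₂ vClause (univ : Finset (Fin n₁ → Bool)) univ ∪
    image₂ vyClause (univ : Finset (Fin n₁ → Bool)) (univ : Finset (Fin n₂ → Bool)) ∪
    univ.image (yzClause (n₁ := n₁))

lemma mem_formula {C : Clause} :
    C ∈ formula n₁ n₂ ↔ (∃ a ε : Fin n₁ → Bool, vClause a ε = C) ∨
      (∃ (a : Fin n₁ → Bool) (δ : Fin n₂ → Bool), vyClause a δ = C) ∨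
      ∃ a : Fin n₁ → Bool, yzClause a = C := by
  simp [formula]

section ClauseShape

variable (a : Fin n₁ → Bool)

lemma card_vClause (ε : Fin n₁ → Bool) : (vClause a ε).card = n₁ + 1 := by
  rw [vClause, card_insert_of_forall_fst_ne (by simp),
    card_signClause (fun i j h => by simpa using h)]

lemma card_vyClause (δ : Fin n₂ → Bool) : (vyClause a δ).card = n₂ + 2 := by
  rw [vyClause, card_insert_of_forall_fst_ne (by simp), card_insert_of_forall_fst_ne (by simp),
    card_signClause (fun i j h => by simpa [Fin.val_inj] using h)]

lemma card_yzClause : (yzClause a).card = n₁ + 1 := by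
  rw [yzClause, card_insert_of_forall_fst_ne (by simp),
    card_signClause (fun i j h => by simpa using h)]

lemma distinctVars_vClause (ε : Fin n₁ → Bool) : distinctVars (vClause a ε) :=
  distinctVars_insert (distinctVars_signClause (fun i j h => by simpa using h) _) (by simp)

lemma distinctVars_vyClause (δ : Fin n₂ → Bool) : distinctVars (vyClause a δ) :=
  distinctVars_insert (distinctVars_insert
    (distinctVars_signClause (fun i j h => by simpa [Fin.val_inj] using h) _) (by simp))
    (by simp)

lemma distinctVars_yzClause : distinctVars (yzClause a) :=
  distinctVars_insert (distinctVars_signClause (fun i j h => by simpa using h) _) (by simp)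

end ClauseShape

theorem isKCNF_formula (n : ℕ) : isKCNF (formula (n + 1) n) (n + 2) := by
  intro C hC
  rcases mem_formula.1 hC with ⟨a, ε, rfl⟩ | ⟨a, δ, rfl⟩ | ⟨a, rfl⟩
  · exact ⟨card_vClause a ε, distinctVars_vClause a ε⟩
  · exact ⟨card_vyClause a δ, distinctVars_vyClause a δ⟩
  · exact ⟨card_yzClause a, distinctVars_yzClause a⟩

theorem not_cnfSatisfiable_formula : ¬ CnfSatisfiable (formula n₁ n₂) := by
  rintro ⟨σ, hσ⟩
  have hv (a : Fin n₁ → Bool) : σ (Var.v a).index = true :=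
    eq_of_satisfies_insert (hσ _ (mem_formula.2 (.inl ⟨a, fun j => !σ (Var.p a j).index, rfl⟩)))
      (not_satisfies_signClause σ)
  have hy (a : Fin n₁ → Bool) : σ (Var.y a).index = false :=
    eq_of_satisfies_insert
      (hσ _ (mem_formula.2 (.inr (.inl ⟨a, fun j : Fin n₂ => !σ (Var.q a j).index, rfl⟩))))
      ((forall_mem_insert _ _ _).2 ⟨by simp [hv], not_satisfies_signClause σ⟩)
  have hz := hσ _ (mem_formula.2 (.inr (.inr ⟨fun j => σ (Var.z j).index, rfl⟩)))
  exact absurd (eq_of_satisfies_insert hz (not_satisfies_signClause σ)) (by simp [hy])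

section Neighborhood

variable {a : Fin n₁ → Bool} {D : Clause}

lemma vClause_neighbor {ε : Fin n₁ → Bool} (hD : D ∈ formula n₁ n₂)
    (h : ∃ l ∈ vClause a ε, ∃ b : Bool, (l.1, b) ∈ D) :
    D ∈ univ.image (vClause a) ∪ univ.image (vyClause (n₂ := n₂) a) := by
  obtain ⟨l, hl, b, hb⟩ := h
  rcases mem_formula.1 hD with ⟨a', ε', rfl⟩ | ⟨a', δ', rfl⟩ | ⟨a', rfl⟩ <;>
    simp only [vClause, vyClause, yzClause, mem_insert, mem_signClause] at hl hb <;>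
    rcases hl with rfl | ⟨j, rfl⟩ <;> simp_all

lemma vyClause_neighbor {δ : Fin n₂ → Bool} (hD : D ∈ formula n₁ n₂)
    (h : ∃ l ∈ vyClause a δ, ∃ b : Bool, (l.1, b) ∈ D) :
    D ∈ univ.image (vClause a) ∪ univ.image (vyClause (n₂ := n₂) a) ∪ {yzClause a} := by
  obtain ⟨l, hl, b, hb⟩ := h
  rcases mem_formula.1 hD with ⟨a', ε', rfl⟩ | ⟨a', δ', rfl⟩ | ⟨a', rfl⟩ <;>
    simp only [vClause, vyClause, yzClause, mem_insert, mem_signClause] at hl hb <;>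
    rcases hl with rfl | rfl | ⟨j, rfl⟩ <;> simp_all [Fin.val_inj]

lemma yzClause_neighbor (hD : D ∈ formula n₁ n₂)
    (h : ∃ l ∈ yzClause a, ∃ b : Bool, (l.1, b) ∈ D) :
    D ∈ univ.image (yzClause (n₁ := n₁)) ∪ univ.image (vyClause (n₂ := n₂) a) := by
  obtain ⟨l, hl, b, hb⟩ := h
  rcases mem_formula.1 hD with ⟨a', ε', rfl⟩ | ⟨a', δ', rfl⟩ | ⟨a', rfl⟩ <;>
    simp only [vClause, vyClause, yzClause, mem_insert, mem_signClause] at hl hb <;>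
    rcases hl with rfl | ⟨j, rfl⟩ <;> simp_all

theorem clauseNbhd_formula_le {C : Clause} (hC : C ∈ formula n₁ n₂) :
    clauseNbhd (formula n₁ n₂) C ≤ 2 ^ n₁ + 2 ^ n₂ + 1 := by
  rcases mem_formula.1 hC with ⟨a, ε, rfl⟩ | ⟨a, δ, rfl⟩ | ⟨a, rfl⟩
  · calc clauseNbhd (formula n₁ n₂) (vClause a ε)
        _ ≤ _ := clauseNbhd_le_card_of_subset _ fun _ hD _ h => vClause_neighbor hD h
        _ ≤ 2 ^ n₁ + 2 ^ n₂ + 1 := (card_image_union_image_le _ _).trans (Nat.le_succ _)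
  · calc clauseNbhd (formula n₁ n₂) (vyClause a δ)
        _ ≤ _ := clauseNbhd_le_card_of_subset _ fun _ hD _ h => vyClause_neighbor hD h
        _ ≤ _ := card_union_le _ _
        _ ≤ 2 ^ n₁ + 2 ^ n₂ + 1 := by grw [card_image_union_image_le, card_singleton]
  · calc clauseNbhd (formula n₁ n₂) (yzClause a)
        _ ≤ _ := clauseNbhd_le_card_of_subset _ fun _ hD _ h => yzClause_neighbor hD h
        _ ≤ 2 ^ n₁ + 2 ^ n₂ + 1 := (card_image_union_image_le _ _).trans (Nat.le_succ _)

end Neighborhood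

end ThreeHalves

/-- For every `k ≥ 3` there is an unsatisfiable `k`-CNF formula with maximum neighborhood
size at most `2^(k-1) + 2^(k-2) + 1`. Consequently `l(k) ≤ 2^(k-1) + 2^(k-2)` for `k ≥ 3`. -/
theorem unsat_kCNF_neighborhood_three_halves (k : ℕ) (hk : 3 ≤ k) :
    ∃ F : CnfFormula, isKCNF F k ∧
      (∀ C ∈ F, clauseNbhd F C ≤ 2 ^ (k - 1) + 2 ^ (k - 2) + 1) ∧
      ¬ CnfSatisfiable F := by
  obtain ⟨n, rfl⟩ : ∃ n, k = n + 2 := ⟨k - 2, by omega⟩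
  exact ⟨ThreeHalves.formula (n + 1) n, ThreeHalves.isKCNF_formula n,
    fun _ hC => ThreeHalves.clauseNbhd_formula_le hC, ThreeHalves.not_cnfSatisfiable_formula⟩
end

section
/- Let n ≥ 1 and let T be a binary tree in which every leaf has depth at least n − 1. Then Maker has a winning pairing strategy on the n-uniform hypergraph H_T. -/
open Finset

/-- A binary tree: a nonempty, prefix-closed finite set of binary strings in which
every node has either both children or none. -/
def IsBinaryTree (T : Finset (List Bool)) : Prop :=
  T.Nonempty ∧
  (∀ t ∈ T, ∀ s : List Bool, s <+: t → s ∈ T) ∧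
  (∀ t ∈ T, (t ++ [false] ∈ T ↔ t ++ [true] ∈ T))

/-- A leaf of the tree `T`: a node with no children. -/
def IsTreeLeaf (T : Finset (List Bool)) (t : List Bool) : Prop :=
  t ∈ T ∧ t ++ [false] ∉ T ∧ t ++ [true] ∉ T

instance (T : Finset (List Bool)) (t : List Bool) : Decidable (IsTreeLeaf T t) :=
  decidable_of_iff (t ∈ T ∧ t ++ [false] ∉ T ∧ t ++ [true] ∉ T) Iff.rfl

/-- The hyperedges of `H_T`: for each leaf `t` of depth at least `n - 1`, the set of the
`n` nodes on the path of length `n - 1` ending at `t`. -/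
def treeEdges (T : Finset (List Bool)) (n : ℕ) : Finset (Finset (List Bool)) :=
  (T.filter fun t => IsTreeLeaf T t ∧ n - 1 ≤ t.length).image
    fun t => (Finset.range n).image fun i => t.take (t.length - i)

/-- The `n`-uniform hypergraph `H_T` associated with a binary tree `T`. -/
def treeHypergraph (T : Finset (List Bool)) (n : ℕ) : FinHypergraph (List Bool) :=
  ⟨T, treeEdges T n⟩

/-!
Take the root as Maker's first vertex and pair every non-root node with its sibling. Whatever
Breaker does, Maker then owns the root and one child of every internal node, so following the
owned children from the root leads to a leaf all of whose ancestors are Maker's. Since that leaf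
has depth at least `n - 1`, the hyperedge ending at it consists of Maker's vertices.
-/

def siblingPair (t : List Bool) : Finset (List Bool) := {t ++ [false], t ++ [true]}

lemma mem_siblingPair {t x : List Bool} : x ∈ siblingPair t ↔ ∃ b, x = t ++ [b] := by
  constructor
  · simp only [siblingPair, mem_insert, mem_singleton]
    rintro (rfl | rfl) <;> exact ⟨_, rfl⟩
  · rintro ⟨b, rfl⟩
    cases b <;> simp [siblingPair]

lemma card_siblingPair (t : List Bool) : (siblingPair t).card = 2 := by
  simp [siblingPair]

lemma nil_notMem_siblingPair (t : List Bool) : [] ∉ siblingPair t := by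
  simp [siblingPair]

lemma disjoint_siblingPair {t s : List Bool} (h : t ≠ s) :
    Disjoint (siblingPair t) (siblingPair s) := by
  refine disjoint_left.2 fun x hxt hxs => h ?_
  obtain ⟨b, rfl⟩ := mem_siblingPair.1 hxt
  obtain ⟨c, hc⟩ := mem_siblingPair.1 hxs
  simpa using congrArg List.dropLast hc

lemma mem_siblingPair_dropLast {x : List Bool} (hx : x ≠ []) : x ∈ siblingPair x.dropLast :=
  mem_siblingPair.2 ⟨_, (List.dropLast_append_getLast hx).symm⟩

def siblingPairs (T : Finset (List Bool)) : Finset (Finset (List Bool)) :=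
  (T.filter fun t => t ++ [false] ∈ T).image siblingPair

lemma exists_treeEdge_subset_prefixes {T : Finset (List Bool)} {n : ℕ} {ℓ : List Bool}
    (hℓ : IsTreeLeaf T ℓ) (hlen : n - 1 ≤ ℓ.length) :
    ∃ e ∈ treeEdges T n, ∀ x ∈ e, x <+: ℓ := by
  refine ⟨_, mem_image_of_mem _ (mem_filter.2 ⟨hℓ.1, hℓ, hlen⟩), fun x hx => ?_⟩
  obtain ⟨i, -, rfl⟩ := mem_image.1 hx
  exact ℓ.take_prefix _

namespace IsBinaryTree

variable {T : Finset (List Bool)} (hT : IsBinaryTree T)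
include hT

lemma mem_of_prefix {s t : List Bool} (ht : t ∈ T) (hst : s <+: t) : s ∈ T :=
  hT.2.1 t ht s hst

lemma nil_mem : [] ∈ T :=
  hT.mem_of_prefix hT.1.choose_spec List.nil_prefix

lemma children_mem_of_not_leaf {t : List Bool} (ht : t ∈ T) (hl : ¬IsTreeLeaf T t) :
    ∀ b, t ++ [b] ∈ T := by
  have hf : t ++ [false] ∈ T := by
    by_contra hf
    exact hl ⟨ht, hf, fun htr => hf ((hT.2.2 t ht).2 htr)⟩
  rintro (_ | _)
  · exact hf
  · exact (hT.2.2 t ht).1 hf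

lemma siblingPair_subset {t : List Bool} (ht : t ∈ T) (hf : t ++ [false] ∈ T) :
    siblingPair t ⊆ T := by
  intro x hx
  obtain ⟨b, rfl⟩ := mem_siblingPair.1 hx
  cases b
  · exact hf
  · exact (hT.2.2 t ht).1 hf

lemma erase_nil_subset_sup_siblingPairs : T.erase [] ⊆ (siblingPairs T).sup id := by
  intro x hx
  obtain ⟨hx, hxT⟩ := mem_erase.1 hx
  have hparent : x.dropLast ∈ T := hT.mem_of_prefix hxT (List.dropLast_prefix x)
  have hchild : x.dropLast ++ [false] ∈ T := by
    refine hT.children_mem_of_not_leaf hparent (fun hl => ?_) false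
    obtain ⟨b, hb⟩ := mem_siblingPair.1 (mem_siblingPair_dropLast hx)
    cases b
    · exact hl.2.1 (hb ▸ hxT)
    · exact hl.2.2 (hb ▸ hxT)
  exact mem_sup.2 ⟨_, mem_image_of_mem _ (mem_filter.2 ⟨hparent, hchild⟩),
    mem_siblingPair_dropLast hx⟩

/-- A deepest node whose nonempty prefixes all lie in `S` is a leaf. -/
lemma exists_leaf_prefixes_mem {S : Finset (List Bool)}
    (hS : ∀ t ∈ T, ¬IsTreeLeaf T t → (S ∩ siblingPair t).Nonempty) :
    ∃ ℓ, IsTreeLeaf T ℓ ∧ ∀ p, p <+: ℓ → p ≠ [] → p ∈ S := by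
  classical
  set good := T.filter fun t => ∀ p, p <+: t → p ≠ [] → p ∈ S
  have hroot : [] ∈ good :=
    mem_filter.2 ⟨hT.nil_mem, fun p hp hne => absurd (List.prefix_nil.1 hp) hne⟩
  obtain ⟨ℓ, hℓ, hmax⟩ := good.exists_max_image List.length ⟨_, hroot⟩
  obtain ⟨hℓT, hℓS⟩ := mem_filter.1 hℓ
  refine ⟨ℓ, by_contra fun hl => ?_, hℓS⟩
  obtain ⟨x, hx⟩ := hS ℓ hℓT hl
  obtain ⟨hxS, hxp⟩ := mem_inter.1 hx
  obtain ⟨b, rfl⟩ := mem_siblingPair.1 hxp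
  have hchild : ℓ ++ [b] ∈ good := by
    refine mem_filter.2 ⟨hT.children_mem_of_not_leaf hℓT hl b, fun p hp hne => ?_⟩
    rcases List.prefix_concat_iff.1 hp with rfl | hp
    · exact hxS
    · exact hℓS p hp hne
  simpa using hmax _ hchild

end IsBinaryTree

theorem maker_wins_on_tree_hypergraph_general (n : ℕ) (T : Finset (List Bool))
    (hT : IsBinaryTree T)
    (hleaf : ∀ t : List Bool, IsTreeLeaf T t → n - 1 ≤ t.length) :
    (treeHypergraph T n).MakerPairingWin := by
  refine ⟨[], hT.nil_mem, siblingPairs T, ?_, ?_, ?_, ?_⟩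
  · simp only [siblingPairs, mem_image, mem_filter, forall_exists_index, and_imp]
    rintro _ t ht hf rfl
    exact ⟨card_siblingPair t, fun x hx =>
      mem_erase.2 ⟨ne_of_mem_of_not_mem hx (nil_notMem_siblingPair t),
        hT.siblingPair_subset ht hf hx⟩⟩
  · simp only [siblingPairs, mem_image, forall_exists_index, and_imp]
    rintro _ t - rfl _ s - rfl hts
    exact disjoint_siblingPair fun h => hts (h ▸ rfl)
  · show (T.erase [] \ _).card ≤ 1
    simp [sdiff_eq_empty_iff_subset.2 hT.erase_nil_subset_sup_siblingPairs]
  · rintro S - hS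
    have hmeets : ∀ t ∈ T, ¬IsTreeLeaf T t → (S ∩ siblingPair t).Nonempty := fun t ht hl =>
      card_pos.1 <| (hS _ <| mem_image_of_mem _ <|
        mem_filter.2 ⟨ht, hT.children_mem_of_not_leaf ht hl false⟩).symm ▸ Nat.one_pos
    obtain ⟨ℓ, hℓ, hℓS⟩ := hT.exists_leaf_prefixes_mem hmeets
    obtain ⟨e, he, heℓ⟩ := exists_treeEdge_subset_prefixes hℓ (hleaf ℓ hℓ)
    refine ⟨e, he, fun x hx => ?_⟩
    by_cases hx₀ : x = []
    · exact hx₀ ▸ mem_insert_self _ _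
    · exact mem_insert_of_mem (hℓS x (heℓ x hx) hx₀)

/-- If every leaf of a binary tree `T` has depth at least `n - 1`, then Maker has a
winning pairing strategy on the `n`-uniform hypergraph `H_T`. -/
theorem maker_wins_on_tree_hypergraph (n : ℕ) (hn : 1 ≤ n) (T : Finset (List Bool))
    (hT : IsBinaryTree T)
    (hleaf : ∀ t : List Bool, IsTreeLeaf T t → n - 1 ≤ t.length) :
    (treeHypergraph T n).MakerPairingWin :=
  maker_wins_on_tree_hypergraph_general n T hT hleaf
end

section
/- For every integer n ≥ 3 there exists a binary tree T in which every leaf has depth at least n − 1 such that the n-uniform hypergraph H_T has maximum neighborhood size at most 2^(n-2) + 2^(n-3), i.e. every hyperedge of H_T intersects at most 2^(n-2) + 2^(n-3) other hyperedges. -/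
open Finset

/-!
A full binary tree is encoded by its set of leaves `L`: a prefix code in which every sibling of
a node on a root-to-leaf path again lies on such a path; the tree is the prefix closure of `L`.

Grafting a complete binary tree of depth `m` below every leaf `t` replaces the hyperedge ending
at `t` by `2 ^ m` hyperedges of size `n + m` that start at the same node. Two of them hanging
below different leaves `t ≠ t'` can only meet above both `t` and `t'`, hence only if the old
hyperedges of `t` and `t'` met. So maximum neighborhood size `d` becomes at most
`(d + 1) * 2 ^ m - 1`. Grafting depth `2` below a single vertex gives `3` for `n = 3`; for
`n ≥ 4`, grafting depth `n - 4` below an explicit tree with `50` leaves whose `4`-uniform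
hypergraph has maximum neighborhood size `5` gives `6 * 2 ^ (n - 4) = 2 ^ (n - 2) + 2 ^ (n - 3)`.
-/

open Finset

def wordsOfLength (m : ℕ) : Finset (List Bool) :=
  univ.image fun f : Fin m → Bool => List.ofFn f

lemma mem_wordsOfLength {m : ℕ} {s : List Bool} : s ∈ wordsOfLength m ↔ s.length = m := by
  refine ⟨fun h => ?_, fun h => ?_⟩
  · obtain ⟨f, -, rfl⟩ := mem_image.mp h
    exact List.length_ofFn
  · subst h
    exact mem_image.mpr ⟨s.get, mem_univ _, List.ofFn_get s⟩

lemma card_wordsOfLength_le (m : ℕ) : (wordsOfLength m).card ≤ 2 ^ m :=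
  card_image_le.trans (by simp)

def extendLeaves (L : Finset (List Bool)) (m : ℕ) : Finset (List Bool) :=
  L.biUnion fun t => (wordsOfLength m).image (t ++ ·)

lemma mem_extendLeaves {L : Finset (List Bool)} {m : ℕ} {x : List Bool} :
    x ∈ extendLeaves L m ↔ ∃ t ∈ L, ∃ s : List Bool, s.length = m ∧ t ++ s = x := by
  simp [extendLeaves, mem_wordsOfLength]

lemma card_extendLeaves_le (L : Finset (List Bool)) (m : ℕ) :
    (extendLeaves L m).card ≤ L.card * 2 ^ m :=
  card_biUnion_le_card_mul _ _ _ fun _ _ => card_image_le.trans (card_wordsOfLength_le m)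

lemma Finset.Nonempty.extendLeaves {L : Finset (List Bool)} (hL : L.Nonempty) (m : ℕ) :
    (extendLeaves L m).Nonempty := by
  obtain ⟨t, ht⟩ := hL
  exact ⟨t ++ List.replicate m false,
    mem_extendLeaves.mpr ⟨t, ht, _, List.length_replicate, rfl⟩⟩

def treeOfLeaves (L : Finset (List Bool)) : Finset (List Bool) :=
  L.biUnion fun t => t.inits.toFinset

lemma mem_treeOfLeaves {L : Finset (List Bool)} {u : List Bool} :
    u ∈ treeOfLeaves L ↔ ∃ t ∈ L, u <+: t := by
  simp [treeOfLeaves]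

def IsPrefixCode (L : Finset (List Bool)) : Prop :=
  ∀ t ∈ L, ∀ t' ∈ L, t <+: t' → t = t'

instance (L : Finset (List Bool)) : Decidable (IsPrefixCode L) :=
  inferInstanceAs (Decidable (∀ t ∈ L, ∀ t' ∈ L, t <+: t' → t = t'))

def IsSiblingClosed (L : Finset (List Bool)) : Prop :=
  ∀ t ∈ L, ∀ i < t.length, ∀ c : Bool, ∃ t' ∈ L, t.take i ++ [c] <+: t'

instance (L : Finset (List Bool)) : Decidable (IsSiblingClosed L) :=
  inferInstanceAs
    (Decidable (∀ t ∈ L, ∀ i < t.length, ∀ c : Bool, ∃ t' ∈ L, t.take i ++ [c] <+: t'))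

namespace IsPrefixCode

variable {L : Finset (List Bool)}

lemma prefix_of_prefix_append (hL : IsPrefixCode L) {a a' b b' u : List Bool}
    (ha : a ∈ L) (ha' : a' ∈ L) (hne : a ≠ a') (h : u <+: a ++ b) (h' : u <+: a' ++ b') :
    u <+: a := by
  rcases le_or_gt u.length a.length with hle | hlt
  · exact List.prefix_of_prefix_length_le h (List.prefix_append a b) hle
  · have hau : a <+: a' ++ b' :=
      (List.prefix_of_prefix_length_le (List.prefix_append a b) h hlt.le).trans h'
    rcases List.prefix_or_prefix_of_prefix hau (List.prefix_append a' b') with h₁ | h₁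
    · exact absurd (hL a ha a' ha' h₁) hne
    · exact absurd (hL a' ha' a ha h₁).symm hne

lemma extendLeaves (hL : IsPrefixCode L) (m : ℕ) : IsPrefixCode (extendLeaves L m) := by
  simp only [IsPrefixCode, mem_extendLeaves]
  rintro _ ⟨t, ht, s, hs, rfl⟩ _ ⟨t', ht', s', hs', rfl⟩ h
  have hlen := h.length_le
  simp only [List.length_append] at hlen
  obtain rfl : t = t' := hL t ht t' ht'
    (List.prefix_of_prefix_length_le ((List.prefix_append t s).trans h)
      (List.prefix_append t' s') (by omega))
  rw [(List.prefix_append_right_inj t).mp h |>.eq_of_length (by omega)]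

end IsPrefixCode

lemma IsSiblingClosed.extendLeaves {L : Finset (List Bool)} (hL : IsSiblingClosed L) (m : ℕ) :
    IsSiblingClosed (extendLeaves L m) := by
  simp only [IsSiblingClosed, mem_extendLeaves]
  rintro _ ⟨t, ht, s, rfl, rfl⟩ i hi c
  rw [List.length_append] at hi
  rcases lt_or_ge i t.length with hit | hti
  · obtain ⟨t', ht', hpre⟩ := hL t ht i hit c
    refine ⟨t' ++ List.replicate s.length false,
      ⟨t', ht', _, List.length_replicate, rfl⟩, ?_⟩
    rw [List.take_append_of_le_length hit.le]
    exact List.prefix_append_of_prefix hpre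
  · obtain ⟨j, rfl⟩ := Nat.exists_eq_add_of_le hti
    refine ⟨t ++ (s.take j ++ [c] ++ List.replicate (s.length - (j + 1)) false),
      ⟨t, ht, _, by simp; omega, rfl⟩, ?_⟩
    rw [List.take_append, List.take_of_length_le (by omega), Nat.add_sub_cancel_left,
      List.append_assoc, List.prefix_append_right_inj]
    exact List.prefix_append _ _

section TreeOfLeaves

variable {L : Finset (List Bool)}

lemma isBinaryTree_treeOfLeaves (hne : L.Nonempty) (hL : IsSiblingClosed L) :
    IsBinaryTree (treeOfLeaves L) := by
  have child_swap : ∀ (u : List Bool) (c d : Bool),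
      u ++ [c] ∈ treeOfLeaves L → u ++ [d] ∈ treeOfLeaves L := by
    simp only [mem_treeOfLeaves]
    rintro u c d ⟨t, ht, hpre⟩
    have hlt : u.length < t.length := by simpa using hpre.length_le
    obtain ⟨t', ht', hpre'⟩ := hL t ht u.length hlt d
    rw [← List.prefix_iff_eq_take.mp ((List.prefix_append u [c]).trans hpre)] at hpre'
    exact ⟨t', ht', hpre'⟩
  refine ⟨?_, ?_, fun u _ => ⟨child_swap u false true, child_swap u true false⟩⟩
  · obtain ⟨t, ht⟩ := hne
    exact ⟨t, mem_treeOfLeaves.mpr ⟨t, ht, List.prefix_refl t⟩⟩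
  · simp only [mem_treeOfLeaves]
    rintro u ⟨t, ht, hut⟩ v hvu
    exact ⟨t, ht, hvu.trans hut⟩

lemma isTreeLeaf_treeOfLeaves_iff (hL : IsPrefixCode L) {x : List Bool} :
    IsTreeLeaf (treeOfLeaves L) x ↔ x ∈ L := by
  simp only [IsTreeLeaf, mem_treeOfLeaves]
  constructor
  · rintro ⟨⟨t, ht, hxt⟩, hfalse, htrue⟩
    rcases hxt.length_le.lt_or_eq with hlt | heq
    · have hchild : x ++ [t[x.length]] <+: t := by
        have h := List.take_append_getElem hlt
        rw [← List.prefix_iff_eq_take.mp hxt] at h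
        exact h ▸ List.take_prefix _ _
      cases hc : t[x.length] <;> rw [hc] at hchild
      exacts [absurd ⟨t, ht, hchild⟩ hfalse, absurd ⟨t, ht, hchild⟩ htrue]
    · rwa [hxt.eq_of_length heq]
  · intro hx
    have no_child : ∀ c : Bool, ¬ ∃ t ∈ L, x ++ [c] <+: t := by
      rintro c ⟨t, ht, hpre⟩
      have hlen := hpre.length_le
      rw [hL x hx t ht ((List.prefix_append x [c]).trans hpre), List.length_append] at hlen
      simp at hlen
    exact ⟨⟨x, hx, List.prefix_refl x⟩, no_child false, no_child true⟩

end TreeOfLeaves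

def pathEdge (n : ℕ) (x : List Bool) : Finset (List Bool) :=
  (range n).image fun i => x.take (x.length - i)

lemma mem_pathEdge {n : ℕ} {x u : List Bool} :
    u ∈ pathEdge n x ↔ u <+: x ∧ x.length < u.length + n := by
  simp only [pathEdge, mem_image, mem_range]
  constructor
  · rintro ⟨i, hi, rfl⟩
    exact ⟨List.take_prefix _ _, by simp; omega⟩
  · rintro ⟨hux, hlen⟩
    have hle := hux.length_le
    refine ⟨x.length - u.length, by omega, ?_⟩
    rw [Nat.sub_sub_self hle, ← List.prefix_iff_eq_take.mp hux]

lemma treeEdges_treeOfLeaves {L : Finset (List Bool)} {n : ℕ} (hL : IsPrefixCode L)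
    (hlen : ∀ t ∈ L, n - 1 ≤ t.length) :
    treeEdges (treeOfLeaves L) n = L.image (pathEdge n) := by
  have hleaves : (treeOfLeaves L).filter (fun t => IsTreeLeaf (treeOfLeaves L) t ∧
      n - 1 ≤ t.length) = L := by
    ext x
    rw [mem_filter, isTreeLeaf_treeOfLeaves_iff hL]
    exact ⟨fun h => h.2.1, fun hx => ⟨mem_treeOfLeaves.mpr ⟨x, hx, List.prefix_refl x⟩, hx,
      hlen x hx⟩⟩
  rw [treeEdges, hleaves]
  rfl

def leafNbhd (n : ℕ) (L : Finset (List Bool)) (t : List Bool) : Finset (List Bool) :=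
  L.filter fun t' => t' ≠ t ∧ (pathEdge n t' ∩ pathEdge n t).Nonempty

lemma nbhdSize_pathEdge_le {L : Finset (List Bool)} {n : ℕ} (hL : IsPrefixCode L)
    (hlen : ∀ t ∈ L, n - 1 ≤ t.length) (x : List Bool) :
    (treeHypergraph (treeOfLeaves L) n).nbhdSize (pathEdge n x) ≤ (leafNbhd n L x).card := by
  rw [FinHypergraph.nbhdSize, treeHypergraph, treeEdges_treeOfLeaves hL hlen, filter_image]
  refine card_image_le.trans (card_le_card fun t ht => ?_)
  simp only [leafNbhd, mem_filter] at ht ⊢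
  exact ⟨ht.1, fun h => ht.2.1 (h ▸ rfl), ht.2.2⟩

section ExtendLeaves

variable {L : Finset (List Bool)} {n m : ℕ}

lemma pathEdge_inter_nonempty_of_append (hL : IsPrefixCode L) {t t' s s' : List Bool}
    (ht : t ∈ L) (ht' : t' ∈ L) (hne : t ≠ t') (hs : s.length = m) (hs' : s'.length = m)
    (h : (pathEdge (n + m) (t ++ s) ∩ pathEdge (n + m) (t' ++ s')).Nonempty) :
    (pathEdge n t ∩ pathEdge n t').Nonempty := by
  obtain ⟨u, hu⟩ := h
  simp only [mem_inter, mem_pathEdge, List.length_append] at hu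
  obtain ⟨⟨hu, hlen⟩, hu', hlen'⟩ := hu
  exact ⟨u, mem_inter.mpr
    ⟨mem_pathEdge.mpr ⟨hL.prefix_of_prefix_append ht ht' hne hu hu', by omega⟩,
      mem_pathEdge.mpr ⟨hL.prefix_of_prefix_append ht' ht hne.symm hu' hu, by omega⟩⟩⟩

lemma leafNbhd_extendLeaves_subset (hL : IsPrefixCode L) {t s : List Bool} (ht : t ∈ L)
    (hs : s.length = m) :
    leafNbhd (n + m) (extendLeaves L m) (t ++ s) ⊆
      (extendLeaves (insert t (leafNbhd n L t)) m).erase (t ++ s) := by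
  intro y hy
  simp only [leafNbhd, mem_filter, mem_extendLeaves] at hy
  obtain ⟨⟨t', ht', s', hs', rfl⟩, hne, hmeet⟩ := hy
  refine mem_erase.mpr ⟨hne, mem_extendLeaves.mpr ⟨t', ?_, s', hs', rfl⟩⟩
  rcases eq_or_ne t' t with rfl | ht't
  · exact mem_insert_self _ _
  · exact mem_insert_of_mem (mem_filter.mpr ⟨ht', ht't,
      pathEdge_inter_nonempty_of_append hL ht' ht ht't hs' hs hmeet⟩)

lemma card_leafNbhd_extendLeaves_le (hL : IsPrefixCode L) {d : ℕ}
    (hnbhd : ∀ t ∈ L, (leafNbhd n L t).card ≤ d) {x : List Bool}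
    (hx : x ∈ extendLeaves L m) :
    (leafNbhd (n + m) (extendLeaves L m) x).card ≤ (d + 1) * 2 ^ m - 1 := by
  obtain ⟨t, ht, s, hs, rfl⟩ := mem_extendLeaves.mp hx
  have hts : t ++ s ∈ extendLeaves (insert t (leafNbhd n L t)) m :=
    mem_extendLeaves.mpr ⟨t, mem_insert_self _ _, s, hs, rfl⟩
  calc (leafNbhd (n + m) (extendLeaves L m) (t ++ s)).card
      ≤ ((extendLeaves (insert t (leafNbhd n L t)) m).erase (t ++ s)).card :=
        card_le_card (leafNbhd_extendLeaves_subset hL ht hs)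
    _ = (extendLeaves (insert t (leafNbhd n L t)) m).card - 1 := card_erase_of_mem hts
    _ ≤ (insert t (leafNbhd n L t)).card * 2 ^ m - 1 :=
        Nat.sub_le_sub_right (card_extendLeaves_le _ m) 1
    _ ≤ (d + 1) * 2 ^ m - 1 := by
        gcongr
        exact (card_insert_le _ _).trans (Nat.succ_le_succ (hnbhd t ht))

end ExtendLeaves

section

variable {L : Finset (List Bool)} {n d : ℕ}

lemma exists_tree_of_leaves (hne : L.Nonempty) (hcode : IsPrefixCode L)
    (hsib : IsSiblingClosed L) (hlen : ∀ t ∈ L, n - 1 ≤ t.length)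
    (hnbhd : ∀ t ∈ L, (leafNbhd n L t).card ≤ d) :
    ∃ T : Finset (List Bool), IsBinaryTree T ∧
      (∀ t : List Bool, IsTreeLeaf T t → n - 1 ≤ t.length) ∧
      (∀ e ∈ (treeHypergraph T n).E, (treeHypergraph T n).nbhdSize e ≤ d) := by
  refine ⟨treeOfLeaves L, isBinaryTree_treeOfLeaves hne hsib,
    fun t ht => hlen t ((isTreeLeaf_treeOfLeaves_iff hcode).mp ht), fun e he => ?_⟩
  rw [treeHypergraph, treeEdges_treeOfLeaves hcode hlen] at he
  obtain ⟨x, hx, rfl⟩ := mem_image.mp he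
  exact (nbhdSize_pathEdge_le hcode hlen x).trans (hnbhd x hx)

lemma exists_tree_of_extendLeaves (hne : L.Nonempty) (hcode : IsPrefixCode L)
    (hsib : IsSiblingClosed L) (hlen : ∀ t ∈ L, n - 1 ≤ t.length)
    (hnbhd : ∀ t ∈ L, (leafNbhd n L t).card ≤ d) (m : ℕ) :
    ∃ T : Finset (List Bool), IsBinaryTree T ∧
      (∀ t : List Bool, IsTreeLeaf T t → n + m - 1 ≤ t.length) ∧
      (∀ e ∈ (treeHypergraph T (n + m)).E,
        (treeHypergraph T (n + m)).nbhdSize e ≤ (d + 1) * 2 ^ m - 1) := by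
  refine exists_tree_of_leaves (hne.extendLeaves m) (hcode.extendLeaves m)
    (hsib.extendLeaves m) (fun x hx => ?_)
    (fun x hx => card_leafNbhd_extendLeaves_le hcode hnbhd hx)
  obtain ⟨t, ht, s, rfl, rfl⟩ := mem_extendLeaves.mp hx
  have := hlen t ht
  simp only [List.length_append]
  omega

end

def caterpillar (k : ℕ) : Finset (List Bool) :=
  insert (List.replicate k false) ((range k).image fun j => List.replicate j false ++ [true])

def baseLeaves : Finset (List Bool) :=
  (univ : Finset Bool).biUnion fun b =>
    insert [b, false, true] (({[b, false, false, false], [b, false, false, true],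
      [b, true, false], [b, true, true]} : Finset (List Bool)).biUnion
        fun u => (caterpillar 5).image (u ++ ·))

lemma isPrefixCode_baseLeaves : IsPrefixCode baseLeaves := by decide +kernel

lemma isSiblingClosed_baseLeaves : IsSiblingClosed baseLeaves := by decide +kernel

lemma card_leafNbhd_baseLeaves_le : ∀ t ∈ baseLeaves, (leafNbhd 4 baseLeaves t).card ≤ 5 := by
  decide +kernel

/-- For every `n ≥ 3` there is a binary tree `T`, all of whose leaves have depth at least
`n - 1`, such that the `n`-uniform hypergraph `H_T` has maximum neighborhood size at most
`2^(n-2) + 2^(n-3)`. -/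
theorem tree_with_small_max_neighborhood (n : ℕ) (hn : 3 ≤ n) :
    ∃ T : Finset (List Bool), IsBinaryTree T ∧
      (∀ t : List Bool, IsTreeLeaf T t → n - 1 ≤ t.length) ∧
      (∀ e ∈ (treeHypergraph T n).E,
        (treeHypergraph T n).nbhdSize e ≤ 2 ^ (n - 2) + 2 ^ (n - 3)) := by
  obtain rfl | ⟨m, rfl⟩ : n = 3 ∨ ∃ m, n = 4 + m := by
    rcases hn.eq_or_lt with h | h
    exacts [Or.inl h.symm, Or.inr ⟨n - 4, by omega⟩]
  · obtain ⟨T, hT, hleaf, hnbhd⟩ := exists_tree_of_extendLeaves (L := {[]}) (n := 1) (d := 0)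
      (by decide) (by decide) (by decide) (by decide) (by decide) 2
    exact ⟨T, hT, hleaf, fun e he => (hnbhd e he).trans (by norm_num)⟩
  · obtain ⟨T, hT, hleaf, hnbhd⟩ := exists_tree_of_extendLeaves (n := 4) (by decide)
      isPrefixCode_baseLeaves isSiblingClosed_baseLeaves (by decide)
      card_leafNbhd_baseLeaves_le m
    refine ⟨T, hT, hleaf, fun e he => (hnbhd e he).trans ?_⟩
    rw [show 4 + m - 2 = m + 2 by omega, show 4 + m - 3 = m + 1 by omega, pow_add, pow_add]
    omega
end

section
/- If there exists a (k,s)-hypergraph, i.e. a k-uniform hypergraph with maximum degree at most s on which Maker has a winning pairing strategy, then there exists a k-uniform hypergraph H with maximum degree at most s on which Maker has a winning pure pairing strategy, i.e. there is a family of pairwise disjoint two-element subsets (pairs) of the vertex set of H covering all but at most one vertex, such that every set of vertices containing exactly one vertex from each pair contains a hyperedge of H. -/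
open Finset

/-!
Take two disjoint copies of `H`. Copy Maker's pairs into both copies and pair every remaining
vertex, in particular the first move `v₀`, with its own twin. Whichever twin of `v₀` a transversal
of these pairs picks singles out one copy, and inside that copy the transversal restricts to a
transversal of the original pairs; Maker's winning pairing strategy then puts a hyperedge of that
copy inside it. Copying changes neither uniformity nor degrees.
-/

namespace Finset

variable {α β : Type*}

lemma product_singleton_injective (b : β) :
    Function.Injective fun s : Finset α => s ×ˢ {b} := by
  intro s t h
  simpa using h

lemma card_inter_product_singleton [DecidableEq α] [DecidableEq β] (S : Finset (α × β))
    (s : Finset α) (b : β) :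
    (S ∩ s ×ˢ {b}).card = (s.filter fun x => (x, b) ∈ S).card := by
  have : S ∩ s ×ˢ {b} = (s.filter fun x => (x, b) ∈ S).map (Function.Embedding.sectL α b) := by
    ext ⟨x, c⟩
    simp only [mem_inter, mem_product, mem_singleton, mem_map, mem_filter,
      Function.Embedding.sectL_apply, Prod.mk.injEq]
    grind
  rw [this, card_map]

end Finset

namespace FinHypergraph

variable {α β : Type*} [DecidableEq α] [DecidableEq β] [Fintype β]

variable (β) in
def copies (H : FinHypergraph α) : FinHypergraph (α × β) where
  V := H.V ×ˢ univ
  E := (H.E ×ˢ univ).image fun eb => eb.1 ×ˢ {eb.2}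

variable {H : FinHypergraph α}

lemma mem_copies_E {e' : Finset (α × β)} :
    e' ∈ (H.copies β).E ↔ ∃ e ∈ H.E, ∃ b, e ×ˢ {b} = e' := by
  simp only [copies, mem_image, mem_product, mem_univ, and_true, Prod.exists]
  exact exists_congr fun e => by rw [exists_and_left]

lemma IsUniform.copies {k : ℕ} (hU : H.IsUniform k) : (H.copies β).IsUniform k := by
  constructor <;> intro e' he' <;> obtain ⟨e, he, b, rfl⟩ := mem_copies_E.1 he'
  · exact product_subset_product (hU.1 e he) (subset_univ _)
  · rw [card_product, card_singleton, mul_one, hU.2 e he]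

lemma degree_copies (v : α) (b : β) : (H.copies β).degree (v, b) = H.degree v := by
  have : (H.copies β).E.filter (fun e' => (v, b) ∈ e') =
      (H.E.filter (v ∈ ·)).image fun e => e ×ˢ ({b} : Finset β) := by
    ext e'
    simp only [mem_filter, mem_copies_E, mem_image]
    constructor
    · rintro ⟨⟨e, he, c, rfl⟩, hv⟩
      obtain ⟨hve, rfl⟩ : v ∈ e ∧ c = b := by simpa using hv
      exact ⟨e, ⟨he, hve⟩, rfl⟩
    · rintro ⟨e, ⟨he, hve⟩, rfl⟩
      exact ⟨⟨e, he, b, rfl⟩, mem_product.2 ⟨hve, mem_singleton_self b⟩⟩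
  rw [degree, this, card_image_of_injective _ (product_singleton_injective b), degree]

variable (β) in
def copiesPairing (P : Finset (Finset α)) (D : Finset α) : Finset (Finset (α × β)) :=
  (P ×ˢ univ).image (fun pb => pb.1 ×ˢ {pb.2}) ∪ D.image fun x => {x} ×ˢ univ

variable {P : Finset (Finset α)} {D : Finset α}

lemma mem_copiesPairing {q : Finset (α × β)} :
    q ∈ copiesPairing β P D ↔ (∃ p ∈ P, ∃ b, p ×ˢ {b} = q) ∨ ∃ x ∈ D, {x} ×ˢ univ = q := by
  simp only [copiesPairing, mem_union, mem_image, mem_product, mem_univ, and_true, Prod.exists]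
  exact or_congr_left (exists_congr fun p => by rw [exists_and_left])

lemma copiesPairing_pairs {V : Finset α} (hP : ∀ p ∈ P, p.card = 2 ∧ p ⊆ V) (hD : D ⊆ V)
    (hβ : Fintype.card β = 2) :
    ∀ q ∈ copiesPairing β P D, q.card = 2 ∧ q ⊆ V ×ˢ univ := by
  intro q hq
  rcases mem_copiesPairing.1 hq with ⟨p, hp, b, rfl⟩ | ⟨x, hx, rfl⟩
  · rw [card_product, card_singleton, mul_one]
    exact ⟨(hP p hp).1, product_subset_product (hP p hp).2 (subset_univ _)⟩
  · rw [card_product, card_singleton, one_mul, card_univ]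
    exact ⟨hβ, product_subset_product (singleton_subset_iff.2 (hD hx)) (subset_univ _)⟩

lemma copiesPairing_pairwise_disjoint (hP : ∀ p ∈ P, ∀ q ∈ P, p ≠ q → Disjoint p q)
    (hD : Disjoint D (P.sup id)) :
    ∀ q ∈ copiesPairing β P D, ∀ r ∈ copiesPairing β P D, q ≠ r → Disjoint q r := by
  have hxp : ∀ x ∈ D, ∀ p ∈ P, Disjoint p {x} := fun x hx p hp =>
    disjoint_singleton_right.2 fun hxp => disjoint_left.1 hD hx (mem_sup.2 ⟨p, hp, hxp⟩)
  intro q hq r hr hqr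
  rcases mem_copiesPairing.1 hq with ⟨p, hp, b, rfl⟩ | ⟨x, hx, rfl⟩ <;>
    rcases mem_copiesPairing.1 hr with ⟨p', hp', c, rfl⟩ | ⟨y, hy, rfl⟩ <;>
    rw [disjoint_product]
  · by_cases hpp' : p = p'
    · subst hpp'
      exact Or.inr (disjoint_singleton.2 fun hbc => hqr (by rw [hbc]))
    · exact Or.inl (hP p hp p' hp' hpp')
  · exact Or.inl (hxp y hy p hp)
  · exact Or.inl (hxp x hx p' hp').symm
  · exact Or.inl (disjoint_singleton.2 fun hxy => hqr (by rw [hxy]))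

lemma product_univ_subset_sup_copiesPairing :
    (P.sup id ∪ D) ×ˢ (univ : Finset β) ⊆ (copiesPairing β P D).sup id := by
  rintro ⟨x, b⟩ hx
  rcases mem_union.1 (mem_product.1 hx).1 with hxP | hxD
  · obtain ⟨p, hp, hxp⟩ := mem_sup.1 hxP
    exact mem_sup.2 ⟨p ×ˢ {b}, mem_copiesPairing.2 (Or.inl ⟨p, hp, b, rfl⟩),
      mem_product.2 ⟨hxp, mem_singleton_self b⟩⟩
  · exact mem_sup.2 ⟨{x} ×ˢ univ, mem_copiesPairing.2 (Or.inr ⟨x, hxD, rfl⟩),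
      mem_product.2 ⟨mem_singleton_self x, mem_univ b⟩⟩

lemma exists_subset_of_copiesPairing_transversal {v₀ : α} (hv₀ : v₀ ∈ D)
    (hwin : ∀ T ⊆ P.sup id, (∀ p ∈ P, (T ∩ p).card = 1) → ∃ e ∈ H.E, e ⊆ insert v₀ T)
    (S : Finset (α × β)) (hS : ∀ q ∈ copiesPairing β P D, (S ∩ q).card = 1) :
    ∃ e ∈ (H.copies β).E, e ⊆ S := by
  obtain ⟨b, hb⟩ : ∃ b, (v₀, b) ∈ S := by
    have h := hS ({v₀} ×ˢ univ) (mem_copiesPairing.2 (Or.inr ⟨v₀, hv₀, rfl⟩))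
    obtain ⟨⟨x, b⟩, hxb⟩ := card_pos.1 (h ▸ one_pos)
    obtain ⟨hS, rfl⟩ : (x, b) ∈ S ∧ v₀ = x := by simpa using hxb
    exact ⟨b, hS⟩
  set T := (P.sup id).filter fun x => (x, b) ∈ S
  have hT : ∀ p ∈ P, (T ∩ p).card = 1 := by
    intro p hp
    rw [← hS (p ×ˢ {b}) (mem_copiesPairing.2 (Or.inl ⟨p, hp, b, rfl⟩)),
      card_inter_product_singleton, filter_inter,
      inter_eq_right.2 (show p ⊆ P.sup id from le_sup (f := id) hp)]
  obtain ⟨e, he, heT⟩ := hwin T (filter_subset _ _) hT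
  refine ⟨e ×ˢ {b}, mem_copies_E.2 ⟨e, he, b, rfl⟩, ?_⟩
  rintro ⟨x, c⟩ hx
  obtain ⟨hxe, rfl⟩ : x ∈ e ∧ b = c := by simpa using hx
  rcases mem_insert.1 (heT hxe) with rfl | hxT
  · exact hb
  · exact (mem_filter.1 hxT).2

theorem MakerPairingWin.copies (h : H.MakerPairingWin) (hβ : Fintype.card β = 2) :
    (H.copies β).MakerPurePairingWin := by
  obtain ⟨v₀, hv₀, P, hP, hdisj, -, hwin⟩ := h
  set D := insert v₀ (H.V.erase v₀ \ P.sup id)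
  have hv₀P : v₀ ∉ P.sup id := fun hv => by
    obtain ⟨p, hp, hvp⟩ := mem_sup.1 hv
    exact notMem_erase v₀ H.V ((hP p hp).2 hvp)
  have hDV : D ⊆ H.V := insert_subset hv₀ (sdiff_subset.trans (erase_subset _ _))
  have hDP : Disjoint D (P.sup id) := disjoint_insert_left.2 ⟨hv₀P, sdiff_disjoint⟩
  have hVPD : H.V ⊆ P.sup id ∪ D := fun x hx => by
    simp only [D, mem_union, mem_insert, mem_sdiff, mem_erase]
    tauto
  have hcover : (H.copies β).V ⊆ (copiesPairing β P D).sup id :=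
    (product_subset_product_left hVPD).trans product_univ_subset_sup_copiesPairing
  refine ⟨copiesPairing β P D,
    copiesPairing_pairs (fun p hp => ⟨(hP p hp).1, (hP p hp).2.trans (erase_subset _ _)⟩) hDV hβ,
    copiesPairing_pairwise_disjoint hdisj hDP, ?_,
    fun S _ => exists_subset_of_copiesPairing_transversal (mem_insert_self v₀ _) hwin S⟩
  rw [sdiff_eq_empty_iff_subset.2 hcover]
  exact zero_le_one

end FinHypergraph

/-- If there is a `(k,s)`-hypergraph (a `k`-uniform hypergraph with maximum degree at
most `s` on which Maker has a winning pairing strategy), then there is a `k`-uniform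
hypergraph with maximum degree at most `s` on which Maker has a winning *pure* pairing
strategy. -/
theorem pairing_to_pure_pairing {α : Type*} [DecidableEq α] (k s : ℕ)
    (H : FinHypergraph α) (hU : H.IsUniform k) (hdeg : ∀ v : α, H.degree v ≤ s)
    (hwin : H.MakerPairingWin) :
    ∃ H' : FinHypergraph (α × Bool), H'.IsUniform k ∧
      (∀ v : α × Bool, H'.degree v ≤ s) ∧
      H'.MakerPurePairingWin :=
  ⟨H.copies Bool, hU.copies, fun ⟨v, b⟩ => (H.degree_copies v b).trans_le (hdeg v),
   hwin.copies Fintype.card_bool⟩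
end
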